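/- arXiv:1211.4115 — 2 statements merged into one kernel-verified Lean document; each statement's English description precedes it below -/
import Mathlib

section
/- In U_q(gl(m,n)), for indices i < s < t < j one has [E_{i,j}, E_{s,t}] = 0 and [F_{i,j}, F_{s,t}] = 0, where [x,y] = xy - (-1)^{x̄ȳ}yx is the super-commutator. -/
noncomputable section

namespace QGL

open scoped TensorProduct

variable (F : Type) [Field F] [CharZero F] (m n : ℕ)

/-- The base field `F(q)`. -/
abbrev Kq := RatFunc F

/-- The indeterminate `q`. -/
def qq : Kq F := RatFunc.X

/-- `q_i = q` for `i ≤ m` and `q_i = q⁻¹` for `i > m`. -/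
def qi (i : ℕ) : Kq F := if i ≤ m then qq F else (qq F)⁻¹

/-- Generators of the quantum supergroup. -/
inductive Gen (m n : ℕ) : Type
  | E : (i : ℕ) → 1 ≤ i → i < m + n → Gen m n
  | Fg : (i : ℕ) → 1 ≤ i → i < m + n → Gen m n
  | K : (j : ℕ) → 1 ≤ j → j ≤ m + n → Gen m n
  | Kinv : (j : ℕ) → 1 ≤ j → j ≤ m + n → Gen m n

abbrev FA := FreeAlgebra (Kq F) (Gen m n)

def eF (i : ℕ) : FA F m n :=
  if h : 1 ≤ i ∧ i < m + n then FreeAlgebra.ι _ (Gen.E i h.1 h.2) else 0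
def fF (i : ℕ) : FA F m n :=
  if h : 1 ≤ i ∧ i < m + n then FreeAlgebra.ι _ (Gen.Fg i h.1 h.2) else 0
def kF (j : ℕ) : FA F m n :=
  if h : 1 ≤ j ∧ j ≤ m + n then FreeAlgebra.ι _ (Gen.K j h.1 h.2) else 0
def kiF (j : ℕ) : FA F m n :=
  if h : 1 ≤ j ∧ j ≤ m + n then FreeAlgebra.ι _ (Gen.Kinv j h.1 h.2) else 0

/-- Root vectors `E_{i,j}` in the free algebra, via `E_{i,j} = E_{i,j-1}E_{j-1,j} - q_{j-1}⁻¹ E_{j-1,j}E_{i,j-1}`. -/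
def erF (i : ℕ) : ℕ → FA F m n
  | 0 => 0
  | j + 1 =>
    if j = i then eF F m n i
    else erF i j * eF F m n j - (qi F m j)⁻¹ • (eF F m n j * erF i j)

/-- Root vectors `F_{i,j}` in the free algebra, via `F_{i,j} = -q_{j-1} F_{i,j-1}F_{j-1,j} + F_{j-1,j}F_{i,j-1}`. -/
def frF (i : ℕ) : ℕ → FA F m n
  | 0 => 0
  | j + 1 =>
    if j = i then fF F m n i
    else -((qi F m j) • (frF i j * fF F m n j)) + fF F m n j * frF i j

/-- `δ_{ij} - δ_{i,j+1}`. -/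
def dexp (i j : ℕ) : ℤ := (if i = j then 1 else 0) - (if i = j + 1 then 1 else 0)

/-- The defining relations (R1)-(R8) of `U_q(gl(m,n))`. -/
inductive Rel : FA F m n → FA F m n → Prop
  | KK {i j : ℕ} (hi1 : 1 ≤ i) (hi2 : i ≤ m + n) (hj1 : 1 ≤ j) (hj2 : j ≤ m + n) :
      Rel (kF F m n i * kF F m n j) (kF F m n j * kF F m n i)
  | KKinv {i j : ℕ} (hi1 : 1 ≤ i) (hi2 : i ≤ m + n) (hj1 : 1 ≤ j) (hj2 : j ≤ m + n) :
      Rel (kF F m n i * kiF F m n j) (kiF F m n j * kF F m n i)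
  | KinvKinv {i j : ℕ} (hi1 : 1 ≤ i) (hi2 : i ≤ m + n) (hj1 : 1 ≤ j) (hj2 : j ≤ m + n) :
      Rel (kiF F m n i * kiF F m n j) (kiF F m n j * kiF F m n i)
  | Kmul_inv {i : ℕ} (hi1 : 1 ≤ i) (hi2 : i ≤ m + n) :
      Rel (kF F m n i * kiF F m n i) 1
  | Kinv_mul {i : ℕ} (hi1 : 1 ≤ i) (hi2 : i ≤ m + n) :
      Rel (kiF F m n i * kF F m n i) 1
  | KE {i j : ℕ} (hi1 : 1 ≤ i) (hi2 : i ≤ m + n) (hj1 : 1 ≤ j) (hj2 : j < m + n) :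
      Rel (kF F m n i * eF F m n j) ((qi F m i ^ dexp i j) • (eF F m n j * kF F m n i))
  | KF {i j : ℕ} (hi1 : 1 ≤ i) (hi2 : i ≤ m + n) (hj1 : 1 ≤ j) (hj2 : j < m + n) :
      Rel (kF F m n i * fF F m n j) ((qi F m i ^ (-dexp i j)) • (fF F m n j * kF F m n i))
  | KiE {i j : ℕ} (hi1 : 1 ≤ i) (hi2 : i ≤ m + n) (hj1 : 1 ≤ j) (hj2 : j < m + n) :
      Rel (kiF F m n i * eF F m n j) ((qi F m i ^ (-dexp i j)) • (eF F m n j * kiF F m n i))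
  | KiF {i j : ℕ} (hi1 : 1 ≤ i) (hi2 : i ≤ m + n) (hj1 : 1 ≤ j) (hj2 : j < m + n) :
      Rel (kiF F m n i * fF F m n j) ((qi F m i ^ dexp i j) • (fF F m n j * kiF F m n i))
  | EF {i j : ℕ} (hi1 : 1 ≤ i) (hi2 : i < m + n) (hj1 : 1 ≤ j) (hj2 : j < m + n) :
      Rel (eF F m n i * fF F m n j -
            (if i = m ∧ j = m then (-1 : Kq F) else 1) • (fF F m n j * eF F m n i))
          (if i = j then ((qi F m i - (qi F m i)⁻¹)⁻¹) •
              (kF F m n i * kiF F m n (i + 1) - kiF F m n i * kF F m n (i + 1))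
            else 0)
  | Esq : Rel (eF F m n m * eF F m n m) 0
  | Fsq : Rel (fF F m n m * fF F m n m) 0
  | EEfar {i j : ℕ} (hi1 : 1 ≤ i) (hi2 : i < m + n) (hj1 : 1 ≤ j) (hj2 : j < m + n)
      (hfar : i + 1 < j ∨ j + 1 < i) :
      Rel (eF F m n i * eF F m n j) (eF F m n j * eF F m n i)
  | FFfar {i j : ℕ} (hi1 : 1 ≤ i) (hi2 : i < m + n) (hj1 : 1 ≤ j) (hj2 : j < m + n)
      (hfar : i + 1 < j ∨ j + 1 < i) :
      Rel (fF F m n i * fF F m n j) (fF F m n j * fF F m n i)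
  | ESerre {i j : ℕ} (hi1 : 1 ≤ i) (hi2 : i < m + n) (hj1 : 1 ≤ j) (hj2 : j < m + n)
      (hadj : j = i + 1 ∨ i = j + 1) (him : i ≠ m) :
      Rel (eF F m n i * eF F m n i * eF F m n j -
            ((qq F) + (qq F)⁻¹) • (eF F m n i * eF F m n j * eF F m n i) +
            eF F m n j * eF F m n i * eF F m n i) 0
  | FSerre {i j : ℕ} (hi1 : 1 ≤ i) (hi2 : i < m + n) (hj1 : 1 ≤ j) (hj2 : j < m + n)
      (hadj : j = i + 1 ∨ i = j + 1) (him : i ≠ m) :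
      Rel (fF F m n i * fF F m n i * fF F m n j -
            ((qq F) + (qq F)⁻¹) • (fF F m n i * fF F m n j * fF F m n i) +
            fF F m n j * fF F m n i * fF F m n i) 0
  | EEx (hm2 : 2 ≤ m) (hn2 : 2 ≤ n) :
      Rel (erF F m n (m - 1) (m + 2) * eF F m n m + eF F m n m * erF F m n (m - 1) (m + 2)) 0
  | FEx (hm2 : 2 ≤ m) (hn2 : 2 ≤ n) :
      Rel (frF F m n (m - 1) (m + 2) * fF F m n m + fF F m n m * frF F m n (m - 1) (m + 2)) 0

/-- The quantum supergroup `U_q(gl(m,n))`. -/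
abbrev Uq := RingQuot (Rel F m n)

def mkU : FA F m n →ₐ[Kq F] Uq F m n := RingQuot.mkAlgHom _ _

def E (i : ℕ) : Uq F m n := mkU F m n (eF F m n i)
def Fv (i : ℕ) : Uq F m n := mkU F m n (fF F m n i)
def K (j : ℕ) : Uq F m n := mkU F m n (kF F m n j)
def Kinv (j : ℕ) : Uq F m n := mkU F m n (kiF F m n j)
def Er (i j : ℕ) : Uq F m n := mkU F m n (erF F m n i j)
def Fr (i j : ℕ) : Uq F m n := mkU F m n (frF F m n i j)

/-- Membership in `ℐ₀`. -/
def inI0 (p : ℕ × ℕ) : Prop :=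
  (1 ≤ p.1 ∧ p.1 < p.2 ∧ p.2 ≤ m) ∨ (m + 1 ≤ p.1 ∧ p.1 < p.2 ∧ p.2 ≤ m + n)

/-- Membership in `ℐ₁`. -/
def inI1 (p : ℕ × ℕ) : Prop := 1 ≤ p.1 ∧ p.1 ≤ m ∧ m + 1 ≤ p.2 ∧ p.2 ≤ m + n

instance (p : ℕ × ℕ) : Decidable (inI0 m n p) := by unfold inI0; infer_instance
instance (p : ℕ × ℕ) : Decidable (inI1 m n p) := by unfold inI1; infer_instance

/-- All pairs `(i,j)` with `1 ≤ i < j ≤ m+n` in lexicographic order. -/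
def pairList : List (ℕ × ℕ) :=
  (List.range' 1 (m + n)).flatMap fun i => (List.range' (i + 1) (m + n)).map fun j => (i, j)

def I0list : List (ℕ × ℕ) := (pairList m n).filter fun p => decide (inI0 m n p)
def I1list : List (ℕ × ℕ) := (pairList m n).filter fun p => decide (inI1 m n p)

/-- `E₁^d`: ordered monomial in odd root vectors. -/
def E1mon (d : ℕ × ℕ → ℕ) : Uq F m n :=
  ((I1list m n).map fun p => Er F m n p.1 p.2 ^ d p).prod

/-- `E₀^ψ`: ordered monomial in even root vectors. -/
def E0mon (ψ : ℕ × ℕ → ℕ) : Uq F m n :=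
  ((I0list m n).map fun p => Er F m n p.1 p.2 ^ ψ p).prod

/-- `F₁^d = Ω(E₁^d)` (opposite order). -/
def F1mon (d : ℕ × ℕ → ℕ) : Uq F m n :=
  ((I1list m n).reverse.map fun p => Fr F m n p.1 p.2 ^ d p).prod

/-- `F₀^ψ = Ω(E₀^ψ)` (opposite order). -/
def F0mon (ψ : ℕ × ℕ → ℕ) : Uq F m n :=
  ((I0list m n).reverse.map fun p => Fr F m n p.1 p.2 ^ ψ p).prod

/-- `K_μ` for `μ ∈ Λ = ℤ^{m+n}`. -/
def Kmu (μ : Fin (m + n) → ℤ) : Uq F m n :=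
  ((List.finRange (m + n)).map fun j =>
    if 0 ≤ μ j then K F m n (j.1 + 1) ^ (μ j).toNat else Kinv F m n (j.1 + 1) ^ (-(μ j)).toNat).prod

/-- The subalgebra `U_q⁺`. -/
def Uplus : Subalgebra (Kq F) (Uq F m n) :=
  Algebra.adjoin _ {x | ∃ i : ℕ, 1 ≤ i ∧ i < m + n ∧ x = E F m n i}

/-- The subalgebra `U_q⁻`. -/
def Uminus : Subalgebra (Kq F) (Uq F m n) :=
  Algebra.adjoin _ {x | ∃ i : ℕ, 1 ≤ i ∧ i < m + n ∧ x = Fv F m n i}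

/-- The subalgebra `U_q⁰`. -/
def Uzero : Subalgebra (Kq F) (Uq F m n) :=
  Algebra.adjoin _ {x | ∃ j : ℕ, 1 ≤ j ∧ j ≤ m + n ∧ (x = K F m n j ∨ x = Kinv F m n j)}

/-- The even subalgebra `U_q(𝔤₀)`. -/
def Ug0 : Subalgebra (Kq F) (Uq F m n) :=
  Algebra.adjoin _
    ({x | ∃ i : ℕ, 1 ≤ i ∧ i < m + n ∧ i ≠ m ∧ (x = E F m n i ∨ x = Fv F m n i)} ∪
     {x | ∃ j : ℕ, 1 ≤ j ∧ j ≤ m + n ∧ (x = K F m n j ∨ x = Kinv F m n j)})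

/-- The trilinear multiplication map `A ⊗ B ⊗ C → U`. -/
def mulMap3 (A B C : Submodule (Kq F) (Uq F m n)) :
    (A ⊗[Kq F] B) ⊗[Kq F] C →ₗ[Kq F] Uq F m n :=
  TensorProduct.lift
    (((LinearMap.mul (Kq F) (Uq F m n)).comp
        (TensorProduct.lift
          (((LinearMap.mul (Kq F) (Uq F m n)).comp A.subtype).compl₂ B.subtype))).compl₂
      C.subtype)

end QGL

/-! Both families of root vectors are produced by one recursion
`R i (j + 1) = R i j * x j - (q j)⁻¹ • (x j * R i j)` in generators `x` obeying (R5)-(R8); for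
the `F`'s this holds up to a nonzero scalar. By induction on `j`, `R i j` super-commutes with
each `x k`, `i < k < j - 1`. At `j = k + 2` this is a direct computation from the q-Serre
relations when `k ≠ m`, and (R8) after splitting `R i (m + 2)` at `m - 1` when `k = m`; the
later generators commute with `x k`. By induction on `t`, `R i j` then super-commutes with
`R s t = [R s (t - 1), x (t - 1)]`, the signs multiplying. -/

namespace QGL

section QCommutator

variable {K A : Type*} [Field K] [Ring A] [Algebra K A]

def qComm (a : K) (u v : A) : A := u * v - a • (v * u)

def ScaledCommute (e : K) (u v : A) : Prop := u * v = e • (v * u)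

def QSerre (c : K) (x y : A) : Prop := x * (x * y) + y * (x * x) = c • (x * (y * x))

theorem scaledCommute_one_iff {u v : A} : ScaledCommute (1 : K) u v ↔ Commute u v := by
  rw [ScaledCommute, one_smul]; rfl

theorem scaledCommute_neg_one_iff {u v : A} : ScaledCommute (-1 : K) u v ↔ u * v + v * u = 0 := by
  rw [ScaledCommute, neg_one_smul, eq_neg_iff_add_eq_zero]

namespace ScaledCommute

variable {e e' : K} {a b c : A}

theorem mul_left (h₁ : ScaledCommute e a c) (h₂ : ScaledCommute e' b c) :
    ScaledCommute (e * e') (a * b) c := by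
  unfold ScaledCommute at *
  rw [mul_assoc, h₂, mul_smul_comm, ← mul_assoc, h₁, smul_mul_assoc, smul_smul, mul_assoc,
    mul_comm e e']

theorem mul_right (h₁ : ScaledCommute e a b) (h₂ : ScaledCommute e' a c) :
    ScaledCommute (e * e') a (b * c) := by
  unfold ScaledCommute at *
  rw [← mul_assoc, h₁, smul_mul_assoc, mul_assoc, h₂, mul_smul_comm, smul_smul, mul_assoc]

theorem smul_left (d : K) (h : ScaledCommute e a c) : ScaledCommute e (d • a) c := by
  unfold ScaledCommute at *
  rw [smul_mul_assoc, h, mul_smul_comm, smul_comm]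

theorem smul_right (d : K) (h : ScaledCommute e a c) : ScaledCommute e a (d • c) := by
  unfold ScaledCommute at *
  rw [mul_smul_comm, h, smul_mul_assoc, smul_comm]

theorem qComm_left (g : K) (h₁ : ScaledCommute e a c) (h₂ : ScaledCommute e' b c) :
    ScaledCommute (e * e') (qComm g a b) c := by
  have hab := h₁.mul_left h₂
  have hba := h₂.mul_left h₁
  rw [mul_comm] at hba
  unfold ScaledCommute qComm at *
  rw [sub_mul, hab, smul_mul_assoc, hba, mul_sub, mul_smul_comm, smul_sub, smul_comm]

theorem qComm_right (g : K) (h₁ : ScaledCommute e a b) (h₂ : ScaledCommute e' a c) :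
    ScaledCommute (e * e') a (qComm g b c) := by
  have hbc := h₁.mul_right h₂
  have hcb := h₂.mul_right h₁
  rw [mul_comm] at hcb
  unfold ScaledCommute qComm at *
  rw [mul_sub, hbc, mul_smul_comm, hcb, sub_mul, smul_mul_assoc, smul_sub, smul_comm]

end ScaledCommute

theorem _root_.Commute.qComm_right {a b c : A} (g : K) (h₁ : Commute a b) (h₂ : Commute a c) :
    Commute a (qComm g b c) :=
  (h₁.mul_right h₂).sub_right ((h₂.mul_right h₁).smul_right g)

theorem qComm_qComm_of_commute (g g' : K) {a b t : A} (h : Commute t a) :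
    qComm g' (qComm g a b) t = qComm g a (qComm g' b t) := by
  have h' : ∀ z : A, a * (t * z) = t * (a * z) := fun z => by
    rw [← mul_assoc, ← h.eq, mul_assoc]
  simp only [qComm, sub_mul, mul_sub, smul_mul_assoc, mul_smul_comm, smul_sub, smul_smul,
    mul_assoc, ← h.eq, h']
  module

theorem QSerre.qComm_of_commute {c : K} (a : K) {x y v : A} (hS : QSerre c x y)
    (hvx : Commute v x) : QSerre c x (qComm a v y) := by
  have hvx' : ∀ z : A, v * (x * z) = x * (v * z) := fun z => by
    rw [← mul_assoc, hvx.eq, mul_assoc]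
  have hA : v * (x * (x * y)) + v * (y * (x * x)) = c • (v * (x * (y * x))) := by
    rw [← mul_add, hS, mul_smul_comm]
  have hB : x * (x * (y * v)) + y * (x * (x * v)) = c • (x * (y * (x * v))) := by
    simpa only [mul_assoc, add_mul, smul_mul_assoc] using congrArg (· * v) hS
  unfold QSerre qComm
  simp only [sub_mul, mul_sub, smul_mul_assoc, mul_smul_comm, smul_sub, smul_smul, mul_assoc]
  have e1 : x * (x * (v * y)) = v * (x * (x * y)) := by rw [hvx', hvx']
  have e2 : v * (x * x) = x * (x * v) := by rw [← mul_assoc, hvx.eq, mul_assoc, hvx.eq]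
  rw [e1, e2, ← hvx', hvx.eq, mul_comm c a, mul_smul, ← hA, ← hB]
  module

theorem commute_qComm_qComm_of_qSerre {Q : K} (hQ : Q ≠ 0) (hc : Q + Q⁻¹ ≠ 0) {u x y : A}
    (huy : Commute u y) (hxy : QSerre (Q + Q⁻¹) x y) (hxu : QSerre (Q + Q⁻¹) x u) :
    Commute (qComm Q⁻¹ (qComm Q⁻¹ u x) y) x := by
  have huy' : ∀ z : A, u * (y * z) = y * (u * z) := fun z => by
    rw [← mul_assoc, huy.eq, mul_assoc]
  have rxy : x * (y * x) = (Q + Q⁻¹)⁻¹ • (x * (x * y) + y * (x * x)) := by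
    rw [hxy, inv_smul_smul₀ hc]
  have rxu : x * (u * x) = (Q + Q⁻¹)⁻¹ • (x * (x * u) + u * (x * x)) := by
    rw [hxu, inv_smul_smul₀ hc]
  have rxy' : ∀ z : A, x * (y * (x * z))
      = (Q + Q⁻¹)⁻¹ • (x * (x * (y * z)) + y * (x * (x * z))) := fun z => by
    simpa only [mul_assoc, add_mul, smul_mul_assoc] using congrArg (· * z) rxy
  have rxu' : ∀ z : A, x * (u * (x * z))
      = (Q + Q⁻¹)⁻¹ • (x * (x * (u * z)) + u * (x * (x * z))) := fun z => by
    simpa only [mul_assoc, add_mul, smul_mul_assoc] using congrArg (· * z) rxu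
  unfold Commute SemiconjBy qComm
  simp only [mul_assoc, sub_mul, mul_sub, smul_mul_assoc, mul_smul_comm, smul_sub, smul_smul,
    smul_add, mul_add, huy.eq, huy', rxy, rxu, rxy', rxu']
  have hQ2 : Q ^ 2 + 1 ≠ 0 := by
    contrapose! hc
    field_simp
    linear_combination hc
  match_scalars <;> field_simp <;> ring

end QCommutator

section RootVectors

variable {K A : Type*} [Field K] [Ring A] [Algebra K A]

def rootVec (q : ℕ → K) (x : ℕ → A) (i : ℕ) : ℕ → A
  | 0 => 0
  | j + 1 => if j = i then x i else qComm (q j)⁻¹ (rootVec q x i j) (x j)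

variable {q : ℕ → K} {x : ℕ → A}

theorem rootVec_succ_self (i : ℕ) : rootVec q x i (i + 1) = x i := by
  rw [rootVec, if_pos rfl]

theorem rootVec_succ {i j : ℕ} (h : i < j) :
    rootVec q x i (j + 1) = qComm (q j)⁻¹ (rootVec q x i j) (x j) := by
  rw [rootVec, if_neg h.ne']

/-- The relations (R5)-(R8) among the generators `x 1, …, x (N - 1)` of one triangular part;
`x m` is the odd generator. -/
structure IsSuperSerreFamily (m N : ℕ) (q : ℕ → K) (x : ℕ → A) : Prop where
  q_ne_zero : ∀ a, q a ≠ 0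
  q_add_inv_ne_zero : ∀ a, q a + (q a)⁻¹ ≠ 0
  q_succ : ∀ a, a ≠ m → q (a + 1) = q a
  commute : ∀ {a b}, 1 ≤ a → a < N → 1 ≤ b → b < N → (a + 1 < b ∨ b + 1 < a) →
    Commute (x a) (x b)
  qSerre : ∀ {a b}, 1 ≤ a → a < N → 1 ≤ b → b < N → (b = a + 1 ∨ a = b + 1) → a ≠ m →
    QSerre (q a + (q a)⁻¹) (x a) (x b)
  odd : 2 ≤ m → m + 2 ≤ N → ScaledCommute (-1 : K) (rootVec q x (m - 1) (m + 2)) (x m)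

namespace IsSuperSerreFamily

variable {m N : ℕ}

theorem commute_rootVec (hx : IsSuperSerreFamily m N q x) {k s : ℕ} (hk : 1 ≤ k) (hkN : k < N)
    (hs : 1 ≤ s) :
    ∀ t, s < t → t ≤ N → (k + 1 < s ∨ t < k) → Commute (x k) (rootVec q x s t) := by
  refine Nat.le_induction ?_ ?_
  · intro htN hfar
    rw [rootVec_succ_self]
    exact hx.commute hk hkN hs (by omega) (by omega)
  · intro t hst ih htN hfar
    rw [rootVec_succ hst]
    exact (ih (by omega) (by omega)).qComm_right _
      (hx.commute hk hkN (by omega) (by omega) (by omega))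

theorem rootVec_split (hx : IsSuperSerreFamily m N q x) {i c : ℕ} (hi : 1 ≤ i) (hic : i < c) :
    ∀ j, c < j → j ≤ N →
      rootVec q x i j = qComm (q c)⁻¹ (rootVec q x i c) (rootVec q x c j) := by
  refine Nat.le_induction ?_ ?_
  · intro _
    rw [rootVec_succ_self, rootVec_succ hic]
  · intro j hcj ih hjN
    have hcomm : Commute (x j) (rootVec q x i c) :=
      hx.commute_rootVec (by omega) (by omega) hi c hic (by omega) (Or.inr hcj)
    rw [rootVec_succ (hic.trans hcj), rootVec_succ hcj, ih (by omega),
      qComm_qComm_of_commute _ _ hcomm]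

theorem qSerre_rootVec (hx : IsSuperSerreFamily m N q x) {i a : ℕ} (hi : 1 ≤ i) (hia : i < a)
    (haN : a < N) (ham : a ≠ m) : QSerre (q a + (q a)⁻¹) (x a) (rootVec q x i a) := by
  obtain ⟨b, rfl⟩ : ∃ b, a = b + 1 := ⟨a - 1, by omega⟩
  rcases (Nat.lt_succ_iff.mp hia).eq_or_lt with rfl | hib
  · rw [rootVec_succ_self]
    exact hx.qSerre (by omega) haN hi (by omega) (Or.inr rfl) ham
  · rw [rootVec_succ hib]
    exact (hx.qSerre (by omega) haN (by omega) (by omega) (Or.inr rfl) ham).qComm_of_commute _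
      (hx.commute_rootVec (by omega) haN hi b hib (by omega) (Or.inr (by omega))).symm

theorem commute_rootVec_add_two (hx : IsSuperSerreFamily m N q x) {i k : ℕ} (hi : 1 ≤ i)
    (hik : i < k) (hkN : k + 2 ≤ N) (hkm : k ≠ m) : Commute (rootVec q x i (k + 2)) (x k) := by
  have hxy : QSerre (q k + (q k)⁻¹) (x k) (x (k + 1)) :=
    hx.qSerre (by omega) (by omega) (by omega) (by omega) (Or.inl rfl) hkm
  have hxu : QSerre (q k + (q k)⁻¹) (x k) (rootVec q x i k) :=
    hx.qSerre_rootVec hi hik (by omega) hkm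
  have huy : Commute (rootVec q x i k) (x (k + 1)) :=
    (hx.commute_rootVec (by omega) (by omega) hi k hik (by omega) (Or.inr (by omega))).symm
  rw [rootVec_succ (by omega), hx.q_succ k hkm, rootVec_succ hik]
  exact commute_qComm_qComm_of_qSerre (hx.q_ne_zero k) (hx.q_add_inv_ne_zero k) huy hxy hxu

theorem scaledCommute_rootVec_odd (hx : IsSuperSerreFamily m N q x) {i : ℕ} (hi : 1 ≤ i)
    (him : i < m) (hmN : m + 2 ≤ N) : ScaledCommute (-1 : K) (rootVec q x i (m + 2)) (x m) := by
  have hodd := hx.odd (by omega) hmN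
  rcases (Nat.le_sub_one_of_lt him).eq_or_lt with rfl | him'
  · exact hodd
  have hcomm : ScaledCommute (1 : K) (rootVec q x i (m - 1)) (x m) :=
    scaledCommute_one_iff.mpr (hx.commute_rootVec (k := m) (by omega) (by omega) hi (m - 1) him'
      (by omega) (Or.inr (by omega))).symm
  rw [hx.rootVec_split hi him' (m + 2) (by omega) hmN, ← one_mul (-1 : K)]
  exact hcomm.qComm_left _ hodd

theorem scaledCommute_rootVec_generator (hx : IsSuperSerreFamily m N q x) {i k : ℕ}
    (hi : 1 ≤ i) (hik : i < k) :
    ∀ j, k + 2 ≤ j → j ≤ N →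
      ScaledCommute (if k = m then -1 else 1 : K) (rootVec q x i j) (x k) := by
  refine Nat.le_induction ?_ ?_
  · intro hjN
    split_ifs with hkm
    · subst hkm
      exact hx.scaledCommute_rootVec_odd hi hik hjN
    · exact scaledCommute_one_iff.mpr (hx.commute_rootVec_add_two hi hik hjN hkm)
  · intro j hkj ih hjN
    have hcomm : ScaledCommute (1 : K) (x j) (x k) :=
      scaledCommute_one_iff.mpr (hx.commute (a := j) (b := k) (by omega) (by omega) (by omega)
        (by omega) (Or.inr (by omega)))
    rw [rootVec_succ (by omega), ← mul_one (if k = m then -1 else 1 : K)]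
    exact (ih (by omega)).qComm_left _ hcomm

theorem scaledCommute_rootVec_rootVec (hx : IsSuperSerreFamily m N q x) {i s j : ℕ}
    (hi : 1 ≤ i) (his : i < s) (hjN : j ≤ N) : ∀ t, s < t → t < j →
      ScaledCommute (if s ≤ m ∧ m < t then -1 else 1 : K) (rootVec q x i j) (rootVec q x s t) := by
  refine Nat.le_induction ?_ ?_
  · intro hsj
    rw [rootVec_succ_self, if_congr (show s ≤ m ∧ m < s + 1 ↔ s = m by omega) rfl rfl]
    exact hx.scaledCommute_rootVec_generator hi his j (by omega) hjN
  · intro t hst ih htj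
    have hsign : (if s ≤ m ∧ m < t then -1 else 1) * (if t = m then -1 else 1)
        = (if s ≤ m ∧ m < t + 1 then -1 else 1 : K) := by
      by_cases htm : t = m
      · simp [htm, show s ≤ m by omega]
      · simp only [htm, if_false, mul_one, show m < t + 1 ↔ m < t by omega]
    rw [rootVec_succ hst, ← hsign]
    exact (ih (by omega)).qComm_right _
      (hx.scaledCommute_rootVec_generator hi (by omega) j (by omega) hjN)

end IsSuperSerreFamily

end RootVectors

section Concrete

variable (F : Type) [Field F] (m n : ℕ)

open Polynomial in
theorem qq_add_inv_ne_zero : qq F + (qq F)⁻¹ ≠ 0 := by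
  have hq : qq F ≠ 0 := RatFunc.X_ne_zero
  intro h
  have hsq : algebraMap F[X] (RatFunc F) (X ^ 2) = algebraMap F[X] (RatFunc F) (-1) := by
    rw [map_pow, map_neg, map_one, RatFunc.algebraMap_X]
    change qq F ^ 2 = -1
    field_simp at h
    linear_combination h
  have := congrArg natDegree (RatFunc.algebraMap_injective F hsq)
  simp at this

theorem qi_ne_zero (a : ℕ) : qi F m a ≠ 0 := by
  unfold qi
  split_ifs <;> simp [qq, RatFunc.X_ne_zero]

theorem qi_add_inv (a : ℕ) : qi F m a + (qi F m a)⁻¹ = qq F + (qq F)⁻¹ := by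
  unfold qi
  split_ifs
  · rfl
  · rw [inv_inv, add_comm]

theorem qi_succ {a : ℕ} (h : a ≠ m) : qi F m (a + 1) = qi F m a := by
  unfold qi
  congr 1
  exact propext (by omega)

theorem mkU_rel {a b : FA F m n} (h : Rel F m n a b) : mkU F m n a = mkU F m n b :=
  RingQuot.mkAlgHom_rel _ h

theorem mkU_eF (i : ℕ) : mkU F m n (eF F m n i) = E F m n i := rfl
theorem mkU_fF (i : ℕ) : mkU F m n (fF F m n i) = Fv F m n i := rfl
theorem mkU_erF (i j : ℕ) : mkU F m n (erF F m n i j) = Er F m n i j := rfl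
theorem mkU_frF (i j : ℕ) : mkU F m n (frF F m n i j) = Fr F m n i j := rfl

theorem Er_eq_rootVec (i : ℕ) : ∀ j, Er F m n i j = rootVec (qi F m) (E F m n) i j
  | 0 => map_zero _
  | j + 1 => by
    rw [Er, erF, rootVec]
    split_ifs
    · rfl
    · rw [← Er_eq_rootVec i j]
      simp only [qComm, Er, E, map_sub, map_smul, map_mul]

theorem exists_Fr_eq_smul_rootVec {i : ℕ} :
    ∀ j, i < j → ∃ c : Kq F, c ≠ 0 ∧ Fr F m n i j = c • rootVec (qi F m) (Fv F m n) i j := by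
  refine Nat.le_induction ⟨1, one_ne_zero, ?_⟩ ?_
  · rw [one_smul, rootVec_succ_self, Fr, frF, if_pos rfl, Fv]
  · rintro j hij ⟨c, hc, hFr⟩
    have hq := qi_ne_zero F m j
    refine ⟨-qi F m j * c, mul_ne_zero (neg_ne_zero.mpr hq) hc, ?_⟩
    rw [rootVec_succ hij, Fr, frF, if_neg (by omega), map_add, map_neg, map_smul, map_mul,
      map_mul, mkU_frF, mkU_fF, hFr]
    simp only [qComm, smul_sub, smul_mul_assoc, mul_smul_comm, smul_smul]
    rw [show -qi F m j * c * (qi F m j)⁻¹ = -c by field_simp, neg_mul, neg_smul, neg_smul,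
      sub_neg_eq_add]

theorem isSuperSerreFamily_E : IsSuperSerreFamily m (m + n) (qi F m) (E F m n) where
  q_ne_zero := qi_ne_zero F m
  q_add_inv_ne_zero a := by rw [qi_add_inv]; exact qq_add_inv_ne_zero F
  q_succ _ := qi_succ F m
  commute hi1 hi2 hj1 hj2 hfar := by
    simpa only [commute_iff_eq, map_mul, mkU_eF] using
      mkU_rel F m n (Rel.EEfar hi1 hi2 hj1 hj2 hfar)
  qSerre hi1 hi2 hj1 hj2 hadj him := by
    have h := mkU_rel F m n (Rel.ESerre hi1 hi2 hj1 hj2 hadj him)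
    simp only [map_add, map_sub, map_smul, map_mul, map_zero, mkU_eF, mul_assoc] at h
    rw [QSerre, qi_add_inv, ← sub_eq_zero, ← h]
    abel
  odd hm hn := by
    rw [← Er_eq_rootVec, scaledCommute_neg_one_iff]
    simpa only [map_add, map_mul, map_zero, mkU_eF, mkU_erF] using
      mkU_rel F m n (Rel.EEx hm (by omega))

theorem isSuperSerreFamily_Fv : IsSuperSerreFamily m (m + n) (qi F m) (Fv F m n) where
  q_ne_zero := qi_ne_zero F m
  q_add_inv_ne_zero a := by rw [qi_add_inv]; exact qq_add_inv_ne_zero F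
  q_succ _ := qi_succ F m
  commute hi1 hi2 hj1 hj2 hfar := by
    simpa only [commute_iff_eq, map_mul, mkU_fF] using
      mkU_rel F m n (Rel.FFfar hi1 hi2 hj1 hj2 hfar)
  qSerre hi1 hi2 hj1 hj2 hadj him := by
    have h := mkU_rel F m n (Rel.FSerre hi1 hi2 hj1 hj2 hadj him)
    simp only [map_add, map_sub, map_smul, map_mul, map_zero, mkU_fF, mul_assoc] at h
    rw [QSerre, qi_add_inv, ← sub_eq_zero, ← h]
    abel
  odd hm hn := by
    obtain ⟨c, hc, hFr⟩ := exists_Fr_eq_smul_rootVec F m n (i := m - 1) (m + 2) (by omega)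
    have h := mkU_rel F m n (Rel.FEx hm (by omega))
    simp only [map_add, map_mul, map_zero, mkU_frF, mkU_fF, hFr, smul_mul_assoc, mul_smul_comm,
      ← smul_add, smul_eq_zero, hc, false_or] at h
    rwa [scaledCommute_neg_one_iff]

end Concrete

theorem root_vectors_supercommute_general (F : Type) [Field F] (m n : ℕ)
    (i s t j : ℕ) (h1 : 1 ≤ i) (h2 : i < s) (h3 : s < t) (h4 : t < j) (h5 : j ≤ m + n) :
    Er F m n i j * Er F m n s t =
      (if (i ≤ m ∧ m < j) ∧ (s ≤ m ∧ m < t) then (-1 : Kq F) else 1) •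
        (Er F m n s t * Er F m n i j) ∧
    Fr F m n i j * Fr F m n s t =
      (if (i ≤ m ∧ m < j) ∧ (s ≤ m ∧ m < t) then (-1 : Kq F) else 1) •
        (Fr F m n s t * Fr F m n i j) := by
  rw [if_congr (show (i ≤ m ∧ m < j) ∧ (s ≤ m ∧ m < t) ↔ s ≤ m ∧ m < t by omega) rfl rfl]
  constructor
  · rw [Er_eq_rootVec, Er_eq_rootVec]
    exact (isSuperSerreFamily_E F m n).scaledCommute_rootVec_rootVec h1 h2 h5 t h3 h4
  · obtain ⟨c, -, hc⟩ := exists_Fr_eq_smul_rootVec F m n j (by omega : i < j)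
    obtain ⟨d, -, hd⟩ := exists_Fr_eq_smul_rootVec F m n t h3
    rw [hc, hd]
    exact (((isSuperSerreFamily_Fv F m n).scaledCommute_rootVec_rootVec h1 h2 h5 t h3 h4).smul_left
      c).smul_right d

/-- In `U_q(gl(m,n))`, for `i < s < t < j` one has `[E_{i,j}, E_{s,t}] = 0`
and `[F_{i,j}, F_{s,t}] = 0` (super-commutators), i.e. the elements commute up to the
Koszul sign determined by their parities. -/
theorem root_vectors_supercommute (F : Type) [Field F] [CharZero F] (m n : ℕ)
    (hm : 1 ≤ m) (hn : 1 ≤ n)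
    (i s t j : ℕ) (h1 : 1 ≤ i) (h2 : i < s) (h3 : s < t) (h4 : t < j) (h5 : j ≤ m + n) :
    Er F m n i j * Er F m n s t =
      (if (i ≤ m ∧ m < j) ∧ (s ≤ m ∧ m < t) then (-1 : Kq F) else 1) •
        (Er F m n s t * Er F m n i j) ∧
    Fr F m n i j * Fr F m n s t =
      (if (i ≤ m ∧ m < j) ∧ (s ≤ m ∧ m < t) then (-1 : Kq F) else 1) •
        (Fr F m n s t * Fr F m n i j) :=
  root_vectors_supercommute_general F m n i s t j h1 h2 h3 h4 h5

end QGL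
end
end

section
/- The following identities hold in the 𝒜-superalgebra 𝒱⁺ for i < c < j: (1) E_{ij}^{(N)} = Σ_{k=0}^{N} (-1)^k q_c^{-k} E_{cj}^{(k)} E_{ic}^{(N)} E_{cj}^{(N-k)}; (2) E_{ic}^{(M)} E_{cj}^{(M+N)} E_{ic}^{(N)} = E_{cj}^{(N)} E_{ic}^{(M+N)} E_{cj}^{(M)}; (3) E_{ij}^{(N)} = Σ_{k=0}^{N} (-1)^k q_c^{-k} E_{ic}^{(N-k)} E_{cj}^{(N)} E_{ic}^{(k)}; (4) E_{cj}^{(N)} E_{ic}^{(M)} = Σ_{0 ≤ k ≤ min(N,M)} (-1)^k q_c^{k+(N-k)(M-k)} E_{ic}^{(M-k)} E_{ij}^{(k)} E_{cj}^{(N-k)}; and (5) [E_{ij}, E_{st}] = (q_j - q_j^{-1}) E_{it} E_{sj} for i < s < j < t, where [x,y] is the super-commutator. -/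
noncomputable section

namespace QVA

/-- The base ring `𝒜 = ℤ[q,q⁻¹]` of Laurent polynomials. -/
abbrev A := LaurentPolynomial ℤ

/-- The indeterminate `q`, as a unit of `𝒜`. -/
def qA : Aˣ :=
  ⟨LaurentPolynomial.T 1, LaurentPolynomial.T (-1),
    by rw [← LaurentPolynomial.T_add]; norm_num,
    by rw [← LaurentPolynomial.T_add]; norm_num⟩

variable (R : Type) [CommRing R] (v : Rˣ) (m n : ℕ)

/-- `q_i = q` for `i ≤ m`, `q_i = q⁻¹` for `i > m` (as a unit). -/
def vi (i : ℕ) : Rˣ := if i ≤ m then v else v⁻¹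

/-- The balanced Gaussian binomial coefficient `[a choose b]` at `v`. -/
def qbinom : ℕ → ℕ → R
  | _, 0 => 1
  | 0, _ + 1 => 0
  | a + 1, b + 1 =>
      (v : R) ^ (b + 1) * qbinom a (b + 1) + ((v⁻¹ : Rˣ) : R) ^ (a - b) * qbinom a b

/-- Membership in `ℐ₀`. -/
def inI0 (m n : ℕ) (p : ℕ × ℕ) : Prop :=
  (1 ≤ p.1 ∧ p.1 < p.2 ∧ p.2 ≤ m) ∨ (m + 1 ≤ p.1 ∧ p.1 < p.2 ∧ p.2 ≤ m + n)

/-- Membership in `ℐ₁`. -/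
def inI1 (m n : ℕ) (p : ℕ × ℕ) : Prop :=
  1 ≤ p.1 ∧ p.1 ≤ m ∧ m + 1 ≤ p.2 ∧ p.2 ≤ m + n

instance (m n : ℕ) (p : ℕ × ℕ) : Decidable (inI0 m n p) := by unfold inI0; infer_instance
instance (m n : ℕ) (p : ℕ × ℕ) : Decidable (inI1 m n p) := by unfold inI1; infer_instance

/-- The generators `E_{ij}^{(N)}` of `𝒱⁺`: one for each `(i,j) ∈ ℐ` with `N ∈ ℕ` if
`(i,j) ∈ ℐ₀` and `N ∈ {0,1}` if `(i,j) ∈ ℐ₁`. -/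
inductive GenP (m n : ℕ) : Type
  | mk : (i j N : ℕ) → (inI0 m n (i, j) ∨ inI1 m n (i, j)) →
      (inI0 m n (i, j) ∨ N ≤ 1) → GenP m n

abbrev FAVp := FreeAlgebra R (GenP m n)

/-- `E_{ij}^{(N)}` in the free algebra (divided powers with disallowed exponents vanish). -/
def ee (i j N : ℕ) : FAVp R m n :=
  if h : (inI0 m n (i, j) ∨ inI1 m n (i, j)) ∧ (inI0 m n (i, j) ∨ N ≤ 1) then
    FreeAlgebra.ι _ (GenP.mk i j N h.1 h.2)
  else 0

/-- The relations (e0)-(e5) of the superalgebra `𝒱⁺`. -/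
inductive RelVp : FAVp R m n → FAVp R m n → Prop
  | e0a {i j : ℕ} (h : inI0 m n (i, j) ∨ inI1 m n (i, j)) :
      RelVp (ee R m n i j 0) 1
  | e0b {i j : ℕ} (h : inI1 m n (i, j)) :
      RelVp (ee R m n i j 1 * ee R m n i j 1) 0
  | e1 {i j N M : ℕ} (h : inI0 m n (i, j) ∨ inI1 m n (i, j)) :
      RelVp (ee R m n i j N * ee R m n i j M)
        (qbinom R v (M + N) N • ee R m n i j (N + M))
  | e2 {i s t j N M : ℕ} (h1 : 1 ≤ i) (h1' : 1 ≤ s) (hj : j ≤ m + n) (hj' : t ≤ m + n)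
      (hord : (i < s ∧ s < t ∧ t < j) ∨ (s < t ∧ t < i ∧ i < j)) :
      RelVp (ee R m n i j N * ee R m n s t M)
        ((if inI1 m n (i, j) ∧ inI1 m n (s, t) then ((-1 : R)) ^ (N * M) else 1) •
          (ee R m n s t M * ee R m n i j N))
  | e3 {t a b N M : ℕ} (h1 : 1 ≤ t) (h2 : t < a) (h3 : a < b) (h4 : b ≤ m + n) :
      RelVp (ee R m n t a N * ee R m n t b M)
        ((((if inI1 m n (t, a) then (-1 : R) else 1) * ((vi R v m t : Rˣ) : R)) ^ (N * M)) •
          (ee R m n t b M * ee R m n t a N))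
  | e4 {a b t N M : ℕ} (h1 : 1 ≤ a) (h2 : a < b) (h3 : b < t) (h4 : t ≤ m + n) :
      RelVp (ee R m n b t N * ee R m n a t M)
        ((((if inI1 m n (b, t) then (-1 : R) else 1) * (((vi R v m t)⁻¹ : Rˣ) : R)) ^ (N * M)) •
          (ee R m n a t M * ee R m n b t N))
  | e5 {i c j N M : ℕ} (h1 : 1 ≤ i) (h2 : i < c) (h3 : c < j) (h4 : j ≤ m + n) :
      RelVp (ee R m n i c N * ee R m n c j M)
        (∑ k ∈ Finset.range (min N M + 1),
          (((vi R v m c ^ (-(((M - k) * (N - k) : ℕ) : ℤ)) : Rˣ) : R)) •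
            (ee R m n c j (M - k) * ee R m n i j k * ee R m n i c (N - k)))

/-- The `𝒜`-superalgebra `𝒱⁺` (for a general base ring `R` and unit `v`). -/
abbrev Vp := RingQuot (RelVp R v m n)

def mkVp : FAVp R m n →ₐ[R] Vp R v m n := RingQuot.mkAlgHom _ _

/-- The divided power `E_{ij}^{(N)}` in `𝒱⁺`. -/
def Ep (i j N : ℕ) : Vp R v m n := mkVp R v m n (ee R m n i j N)

/-- All pairs `(i,j)`, `1 ≤ i < j ≤ m+n`, in lexicographic order. -/
def pairList (m n : ℕ) : List (ℕ × ℕ) :=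
  (List.range' 1 (m + n)).flatMap fun i => (List.range' (i + 1) (m + n)).map fun j => (i, j)

def I0list (m n : ℕ) : List (ℕ × ℕ) := (pairList m n).filter fun p => decide (inI0 m n p)
def I1list (m n : ℕ) : List (ℕ × ℕ) := (pairList m n).filter fun p => decide (inI1 m n p)

/-- The ordered monomial `E₀^{(ψ)}` of divided powers. -/
def E0P (ψ : ℕ × ℕ → ℕ) : Vp R v m n :=
  ((I0list m n).map fun p => Ep R v m n p.1 p.2 (ψ p)).prod

/-- The ordered monomial `E₁^{d}`. -/
def E1P (d : ℕ × ℕ → ℕ) : Vp R v m n :=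
  ((I1list m n).map fun p => Ep R v m n p.1 p.2 (d p)).prod

end QVA

namespace QVA

variable (R : Type) [CommRing R] (v : Rˣ)

lemma qb_zero_right (a : ℕ) : qbinom R v a 0 = 1 := by cases a <;> rfl

lemma qb_succ (a b : ℕ) : qbinom R v (a+1) (b+1) =
    (v : R) ^ (b + 1) * qbinom R v a (b + 1) +
      ((v⁻¹ : Rˣ) : R) ^ (a - b) * qbinom R v a b := rfl

lemma qb_of_lt : ∀ a b : ℕ, a < b → qbinom R v a b = 0 := by
  intro a
  induction a with
  | zero => intro b hb; match b, hb with | b+1, _ => rfl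
  | succ a ih =>
      intro b hb
      match b, hb with
      | b+1, hb =>
        rw [qb_succ, ih (b+1) (by omega), ih b (by omega)]
        ring

lemma qb_self : ∀ a : ℕ, qbinom R v a a = 1 := by
  intro a
  induction a with
  | zero => rfl
  | succ a ih =>
      rw [qb_succ, qb_of_lt R v a (a+1) (by omega), ih, Nat.sub_self]
      ring

lemma qb_one_mul (a : ℕ) :
    ((v : R) - ((v⁻¹ : Rˣ) : R)) * qbinom R v a 1 = (v : R)^a - ((v⁻¹ : Rˣ) : R)^a := by
  induction a with
  | zero => simp [qb_of_lt R v 0 1 (by omega)]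
  | succ a ih =>
      rw [qb_succ, qb_zero_right, Nat.sub_zero]
      have hv : (v : R) * ((v⁻¹ : Rˣ) : R) = 1 := by
        rw [← Units.val_mul, mul_inv_cancel, Units.val_one]
      have : ((v : R) - ((v⁻¹ : Rˣ) : R)) * ((v : R) ^ 1 * qbinom R v a 1 + ((v⁻¹:Rˣ):R) ^ a * 1)
          = (v:R) * (((v : R) - ((v⁻¹ : Rˣ) : R)) * qbinom R v a 1) + ((v⁻¹:Rˣ):R)^a * (v:R)
            - ((v⁻¹:Rˣ):R)^a * ((v⁻¹:Rˣ):R) := by ring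
      rw [this, ih]
      ring


lemma qb_pascal2 : ∀ a b : ℕ, qbinom R v (a+1) (b+1) =
    ((v⁻¹ : Rˣ) : R)^(b+1) * qbinom R v a (b+1) + (v : R)^(a-b) * qbinom R v a b := by
  intro a
  induction a with
  | zero =>
      intro b
      cases b with
      | zero => simp [qb_self, qb_of_lt R v 0 1 (by omega), qb_zero_right]
      | succ b =>
          rw [qb_of_lt R v 1 (b+2) (by omega), qb_of_lt R v 0 (b+2) (by omega),
            qb_of_lt R v 0 (b+1) (by omega)]
          ring
  | succ a ih =>
      intro b
      cases b with
      | zero =>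
          rw [qb_succ, qb_zero_right]
          simp only [Nat.sub_zero]
          linear_combination qb_one_mul R v (a+1)
      | succ b =>
          rcases Nat.lt_or_ge a (b+1) with hab | hab
          · -- degenerate: b ≥ a
            rcases Nat.lt_or_ge a b with h2 | h2
            · rw [qb_of_lt R v (a+2) (b+2) (by omega), qb_of_lt R v (a+1) (b+2) (by omega),
                qb_of_lt R v (a+1) (b+1) (by omega)]
              ring
            · -- a = b
              have hab' : a = b := by omega
              subst hab'
              rw [qb_self, qb_of_lt R v (a+1) (a+2) (by omega), qb_self, Nat.sub_self]
              ring
          · obtain ⟨d, hd⟩ : ∃ d, a = b + 1 + d := ⟨a - (b+1), by omega⟩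
            subst hd
            have f1 : qbinom R v (b+1+d+1) (b+2) =
                (v : R)^(b+2) * qbinom R v (b+1+d) (b+2)
                  + ((v⁻¹ : Rˣ) : R)^d * qbinom R v (b+1+d) (b+1) := by
              have := qb_succ R v (b+1+d) (b+1)
              rwa [show b+1+d - (b+1) = d by omega] at this
            have f2 : qbinom R v (b+1+d+1) (b+2) =
                ((v⁻¹ : Rˣ) : R)^(b+2) * qbinom R v (b+1+d) (b+2)
                  + (v : R)^d * qbinom R v (b+1+d) (b+1) := by
              have := ih (b+1)
              rwa [show b+1+d - (b+1) = d by omega] at this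
            have f3 : qbinom R v (b+1+d+1) (b+1) =
                (v : R)^(b+1) * qbinom R v (b+1+d) (b+1)
                  + ((v⁻¹ : Rˣ) : R)^(d+1) * qbinom R v (b+1+d) b := by
              have := qb_succ R v (b+1+d) b
              rwa [show b+1+d - b = d+1 by omega] at this
            have f4 : qbinom R v (b+1+d+1) (b+1) =
                ((v⁻¹ : Rˣ) : R)^(b+1) * qbinom R v (b+1+d) (b+1)
                  + (v : R)^(d+1) * qbinom R v (b+1+d) b := by
              have := ih b
              rwa [show b+1+d - b = d+1 by omega] at this
            rw [qb_succ, show b+1+d+1 - (b+1) = d+1 by omega]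
            linear_combination (v : R)^(b+2) * f2 - ((v⁻¹ : Rˣ) : R)^(b+2) * f1
              - (v : R)^(d+1) * f3 + ((v⁻¹ : Rˣ) : R)^(d+1) * f4

lemma qb_symm : ∀ a b : ℕ, b ≤ a → qbinom R v a b = qbinom R v a (a - b) := by
  intro a
  induction a with
  | zero => intro b hb; interval_cases b; rfl
  | succ a ih =>
      intro b hb
      cases b with
      | zero => rw [qb_zero_right, Nat.sub_zero, qb_self]
      | succ b =>
          rcases Nat.lt_or_ge b a with h2 | h2
          · obtain ⟨d, hd⟩ : ∃ d, a = b + 1 + d := ⟨a - (b+1), by omega⟩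
            subst hd
            rw [qb_pascal2, show b+1+d+1 - (b+1) = d+1 by omega, qb_succ,
              show b+1+d-b = d+1 by omega, show b+1+d - d = b+1 by omega,
              ih (b+1) (by omega), ih b (by omega),
              show b+1+d - (b+1) = d by omega, show b+1+d - b = d+1 by omega]
            ring
          · have : b = a := by omega
            subst this
            rw [qb_self, Nat.sub_self, qb_zero_right]

lemma qb_ortho (w : Rˣ) (hw : w = v ∨ w = v⁻¹) :
    ∀ a : ℕ, ∑ k ∈ Finset.range (a+1),
        (-1 : R)^k * ((w ^ (k*(a-1)) : Rˣ) : R) * qbinom R v a k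
      = if a = 0 then 1 else 0 := by
  intro a
  induction a with
  | zero => simp [qb_zero_right]
  | succ a ih =>
      simp only [Nat.add_sub_cancel, Nat.succ_ne_zero, if_false]
      set g : ℕ → R := fun j => (-1 : R)^j * ((w ^ (j*a) : Rˣ) : R)
        * ((v : R)^j * qbinom R v a j) with hg
      set c : R := ((w^a * (v⁻¹)^a : Rˣ) : R) with hc
      set T : R := ∑ k ∈ Finset.range (a+1), g k with hT
      have main : ∑ k ∈ Finset.range (a+1+1),
          (-1 : R)^k * ((w ^ (k*a) : Rˣ) : R) * qbinom R v (a+1) k = (1 - c) * T := by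
        rw [Finset.sum_range_succ']
        have hstep : ∀ k ∈ Finset.range (a+1),
            (-1 : R)^(k+1) * ((w ^ ((k+1)*a) : Rˣ) : R) * qbinom R v (a+1) (k+1)
              = g (k+1) - c * g k := by
          intro k hk
          rw [Finset.mem_range] at hk
          have h1 : ((w ^ ((k+1)*a) : Rˣ) : R)
              = ((w^a : Rˣ) : R) * ((w^(k*a) : Rˣ) : R) := by
            rw [← Units.val_mul, ← pow_add]
            congr 2
            ring
          have h2u : (v⁻¹ : Rˣ)^(a-k) = (v⁻¹)^a * v^k := by
            calc (v⁻¹ : Rˣ)^(a-k) = (v⁻¹)^(a-k) * ((v⁻¹)^k * v^k) := by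
                  rw [← mul_pow, inv_mul_cancel, one_pow, mul_one]
            _ = (v⁻¹)^(a-k+k) * v^k := by rw [pow_add, mul_assoc]
            _ = (v⁻¹)^a * v^k := by rw [show a-k+k = a by omega]
          have h2 : ((v⁻¹ : Rˣ) : R)^(a-k)
              = (((v⁻¹)^a : Rˣ) : R) * (v : R)^k := by
            rw [← Units.val_pow_eq_pow_val, h2u]
            push_cast
            ring
          rw [qb_succ]
          simp only [hg, hc]
          rw [h1, h2, Units.val_mul]
          ring
        rw [Finset.sum_congr rfl hstep, Finset.sum_sub_distrib, ← Finset.mul_sum]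
        have h3 : ∑ k ∈ Finset.range (a+2), g k = T := by
          rw [Finset.sum_range_succ]
          have hga : g (a+1) = 0 := by
            rw [hg]; simp only []
            rw [qb_of_lt R v a (a+1) (by omega)]
            ring
          rw [hga, add_zero, hT]
        have h2' : ∑ k ∈ Finset.range (a+1), g (k+1) = T - 1 := by
          have h5 := Finset.sum_range_succ' g (a+1)
          have h4 : g 0 = 1 := by rw [hg]; simp [qb_zero_right]
          rw [h3, h4] at h5
          linear_combination -h5
        rw [h2', qb_zero_right, ← hT]
        simp only [Nat.zero_mul, pow_zero, Units.val_one]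
        ring
      rw [main]
      rcases hw with hw | hw
      · have : c = 1 := by
          rw [hc, hw, ← mul_pow, mul_inv_cancel, one_pow, Units.val_one]
        rw [this]
        ring
      · cases a with
        | zero =>
            have : c = 1 := by rw [hc]; simp
            rw [this]; ring
        | succ b =>
            simp only [Nat.succ_ne_zero, if_false, Nat.add_sub_cancel] at ih
            have hT0 : T = 0 := by
              rw [hT, ← ih]
              apply Finset.sum_congr rfl
              intro k hk
              have hu : ((w ^ (k*(b+1)) : Rˣ) : R) * (v:R)^k = ((w ^ (k*b) : Rˣ) : R) := by
                rw [← Units.val_pow_eq_pow_val v k, ← Units.val_mul]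
                congr 1
                rw [hw]
                calc (v⁻¹ : Rˣ)^(k*(b+1)) * v^k = (v⁻¹)^(k*b) * ((v⁻¹)^k * v^k) := by
                      rw [← mul_assoc, ← pow_add, show k*b + k = k*(b+1) from by ring]
                  _ = (v⁻¹)^(k*b) := by rw [← mul_pow, inv_mul_cancel, one_pow, mul_one]
              simp only [hg]
              rw [← hu]
              ring
            rw [hT0]
            ring


lemma tri {M : Type*} [AddCommMonoid M] (K : ℕ) (f : ℕ → ℕ → M) :
    ∑ k ∈ Finset.range (K+1), ∑ l ∈ Finset.range (K+1-k), f k l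
      = ∑ l ∈ Finset.range (K+1), ∑ k ∈ Finset.range (K+1-l), f k l := by
  have h : ∀ (g : ℕ → ℕ → M), ∑ k ∈ Finset.range (K+1), ∑ l ∈ Finset.range (K+1-k), g k l
      = ∑ k ∈ Finset.range (K+1), ∑ l ∈ Finset.range (K+1), if k + l ≤ K then g k l else 0 := by
    intro g
    refine Finset.sum_congr rfl fun k hk => ?_
    rw [Finset.mem_range] at hk
    have : Finset.range (K+1-k) = (Finset.range (K+1)).filter (fun l => k + l ≤ K) := by
      ext l
      simp only [Finset.mem_range, Finset.mem_filter]
      omega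
    rw [this, Finset.sum_filter]
  rw [h f, h (fun l k => f k l), Finset.sum_comm]
  refine Finset.sum_congr rfl fun l _ => Finset.sum_congr rfl fun k _ => ?_
  rw [add_comm]

lemma antidiag {M : Type*} [AddCommMonoid M] (K : ℕ) (f : ℕ → ℕ → M) :
    ∑ k ∈ Finset.range (K+1), ∑ l ∈ Finset.range (K+1-k), f k l
      = ∑ s ∈ Finset.range (K+1), ∑ k ∈ Finset.range (s+1), f k (s-k) := by
  have h1 : ∀ k, k ∈ Finset.range (K+1) →
      ∑ l ∈ Finset.range (K+1-k), f k l
        = ∑ s ∈ Finset.range (K+1), if k ≤ s then f k (s-k) else 0 := by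
    intro k hk
    rw [Finset.mem_range] at hk
    have h2 : Finset.Ico k (K+1) = (Finset.range (K+1)).filter (fun s => k ≤ s) := by
      ext s
      simp only [Finset.mem_Ico, Finset.mem_range, Finset.mem_filter]
      omega
    rw [show ∑ l ∈ Finset.range (K+1-k), f k l
        = ∑ s ∈ Finset.Ico k (K+1), f k (s-k) by
      rw [Finset.sum_Ico_eq_sum_range]
      refine Finset.sum_congr rfl fun l _ => ?_
      congr 1
      omega]
    rw [h2, Finset.sum_filter]
  rw [Finset.sum_congr rfl h1, Finset.sum_comm]
  refine Finset.sum_congr rfl fun s hs => ?_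
  rw [Finset.mem_range] at hs
  have h3 : Finset.range (s+1) = (Finset.range (K+1)).filter (fun k => k ≤ s) := by
    ext k
    simp only [Finset.mem_range, Finset.mem_filter]
    omega
  rw [h3, Finset.sum_filter]


variable (m n : ℕ)

lemma mem_I {i j : ℕ} (h1 : 1 ≤ i) (h2 : i < j) (h3 : j ≤ m+n) :
    inI0 m n (i,j) ∨ inI1 m n (i,j) := by
  unfold inI0 inI1
  dsimp only
  omega

lemma ee_eq_zero {i j N : ℕ} (h : ¬ inI0 m n (i,j)) (hN : 2 ≤ N) :
    ee R m n i j N = 0 := by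
  unfold ee
  rw [dif_neg]
  rintro ⟨-, h2⟩
  rcases h2 with h2 | h2
  · exact h h2
  · omega

lemma Ep_ne {i j N : ℕ} (h : ¬ inI0 m n (i,j)) (hN : 2 ≤ N) :
    Ep R v m n i j N = 0 := by
  unfold Ep
  rw [ee_eq_zero R m n h hN, map_zero]

lemma Ep_zero {i j : ℕ} (h : inI0 m n (i,j) ∨ inI1 m n (i,j)) :
    Ep R v m n i j 0 = 1 := by
  have h2 := RingQuot.mkAlgHom_rel (S := R) (s := RelVp R v m n) (RelVp.e0a h)
  rw [map_one] at h2
  exact h2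

lemma Ep_e1 {i j : ℕ} (N M : ℕ) (h : inI0 m n (i,j) ∨ inI1 m n (i,j)) :
    Ep R v m n i j N * Ep R v m n i j M
      = qbinom R v (M+N) N • Ep R v m n i j (N+M) := by
  have h2 := RingQuot.mkAlgHom_rel (S := R) (s := RelVp R v m n)
    (RelVp.e1 (N := N) (M := M) h)
  rw [map_mul, map_smul] at h2
  exact h2

lemma Ep_e2 {i s t j : ℕ} (N M : ℕ) (h1 : 1 ≤ i) (h1' : 1 ≤ s) (hj : j ≤ m + n)
    (hj' : t ≤ m + n) (hord : (i < s ∧ s < t ∧ t < j) ∨ (s < t ∧ t < i ∧ i < j)) :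
    Ep R v m n i j N * Ep R v m n s t M
      = (if inI1 m n (i, j) ∧ inI1 m n (s, t) then ((-1 : R)) ^ (N * M) else 1) •
          (Ep R v m n s t M * Ep R v m n i j N) := by
  have h2 := RingQuot.mkAlgHom_rel (S := R) (s := RelVp R v m n)
    (RelVp.e2 (N := N) (M := M) h1 h1' hj hj' hord)
  rw [map_mul, map_smul, map_mul] at h2
  exact h2

lemma Ep_e3 {t a b : ℕ} (N M : ℕ) (h1 : 1 ≤ t) (h2 : t < a) (h3 : a < b) (h4 : b ≤ m + n) :
    Ep R v m n t a N * Ep R v m n t b M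
      = (((if inI1 m n (t, a) then (-1 : R) else 1) * ((vi R v m t : Rˣ) : R)) ^ (N * M)) •
          (Ep R v m n t b M * Ep R v m n t a N) := by
  have h5 := RingQuot.mkAlgHom_rel (S := R) (s := RelVp R v m n)
    (RelVp.e3 (N := N) (M := M) h1 h2 h3 h4)
  rw [map_mul, map_smul, map_mul] at h5
  exact h5

lemma Ep_e4 {a b t : ℕ} (N M : ℕ) (h1 : 1 ≤ a) (h2 : a < b) (h3 : b < t) (h4 : t ≤ m + n) :
    Ep R v m n b t N * Ep R v m n a t M
      = (((if inI1 m n (b, t) then (-1 : R) else 1) * (((vi R v m t)⁻¹ : Rˣ) : R)) ^ (N * M)) •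
          (Ep R v m n a t M * Ep R v m n b t N) := by
  have h5 := RingQuot.mkAlgHom_rel (S := R) (s := RelVp R v m n)
    (RelVp.e4 (N := N) (M := M) h1 h2 h3 h4)
  rw [map_mul, map_smul, map_mul] at h5
  exact h5

lemma Ep_e5 {i c j : ℕ} (N M : ℕ) (h1 : 1 ≤ i) (h2 : i < c) (h3 : c < j) (h4 : j ≤ m + n) :
    Ep R v m n i c N * Ep R v m n c j M
      = ∑ k ∈ Finset.range (min N M + 1),
          (((vi R v m c ^ (-(((M - k) * (N - k) : ℕ) : ℤ)) : Rˣ) : R)) •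
            (Ep R v m n c j (M - k) * Ep R v m n i j k * Ep R v m n i c (N - k)) := by
  have h5 := RingQuot.mkAlgHom_rel (S := R) (s := RelVp R v m n)
    (RelVp.e5 (N := N) (M := M) h1 h2 h3 h4)
  rw [map_mul, map_sum] at h5
  simp only [map_smul, map_mul] at h5
  exact h5

lemma vi_cases (c : ℕ) : vi R v m c = v ∨ vi R v m c = v⁻¹ := by
  unfold vi
  split
  · exact Or.inl rfl
  · exact Or.inr rfl

lemma key_sum (u : Rˣ) (hu : u = v ∨ u = v⁻¹) (a : ℕ) :
    ∑ k ∈ Finset.range (a+1),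
        (-1:R)^k * ((u ^ (-(k:ℤ)) : Rˣ) : R) * ((u ^ (-((((a-k)*a : ℕ)) : ℤ)) : Rˣ) : R)
          * qbinom R v a k
      = if a = 0 then 1 else 0 := by
  have hterm : ∀ k ∈ Finset.range (a+1),
      (-1:R)^k * ((u ^ (-(k:ℤ)) : Rˣ) : R) * ((u ^ (-((((a-k)*a : ℕ)) : ℤ)) : Rˣ) : R)
          * qbinom R v a k
        = ((u ^ (-(((a*a : ℕ)) : ℤ)) : Rˣ) : R)
            * ((-1:R)^k * ((u ^ (k*(a-1)) : Rˣ) : R) * qbinom R v a k) := by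
    intro k hk
    rw [Finset.mem_range] at hk
    have hu2 : (u ^ (-(k:ℤ)) : Rˣ) * (u ^ (-((((a-k)*a : ℕ)) : ℤ)) : Rˣ)
        = (u ^ (-(((a*a : ℕ)) : ℤ)) : Rˣ) * u ^ (((k*(a-1) : ℕ)) : ℤ) := by
      rw [← zpow_add, ← zpow_add]
      congr 1
      rcases Nat.eq_zero_or_pos a with ha | ha
      · subst ha; interval_cases k; simp
      · obtain ⟨b, rfl⟩ : ∃ b, a = b + 1 := ⟨a-1, by omega⟩
        push_cast [Nat.cast_sub (by omega : k ≤ b+1)]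
        ring
    have hR : ((u ^ (-(k:ℤ)) : Rˣ) : R) * ((u ^ (-((((a-k)*a : ℕ)) : ℤ)) : Rˣ) : R)
        = ((u ^ (-(((a*a : ℕ)) : ℤ)) : Rˣ) : R) * ((u ^ (k*(a-1)) : Rˣ) : R) := by
      rw [← Units.val_mul, hu2, Units.val_mul, zpow_natCast]
    linear_combination ((-1:R)^k * qbinom R v a k) * hR
  rw [Finset.sum_congr rfl hterm, ← Finset.mul_sum, qb_ortho R v u hu a]
  rcases Nat.eq_zero_or_pos a with ha | ha
  · subst ha; simp
  · rw [if_neg (by omega : ¬ a = 0), mul_zero]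

lemma part1 {i c j : ℕ} (h1 : 1 ≤ i) (h2 : i < c) (h3 : c < j) (h4 : j ≤ m+n) (N : ℕ) :
    Ep R v m n i j N
      = ∑ k ∈ Finset.range (N + 1),
          ((-1 : R) ^ k * ((vi R v m c ^ (-(k : ℤ)) : Rˣ) : R)) •
            (Ep R v m n c j k * Ep R v m n i c N * Ep R v m n c j (N - k)) := by
  have hu := vi_cases R v m c
  have hmemY : inI0 m n (c,j) ∨ inI1 m n (c,j) := mem_I m n (by omega) h3 h4
  have hstep : ∀ k ∈ Finset.range (N+1),
      ((-1 : R) ^ k * ((vi R v m c ^ (-(k : ℤ)) : Rˣ) : R)) •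
            (Ep R v m n c j k * Ep R v m n i c N * Ep R v m n c j (N - k))
        = ∑ l ∈ Finset.range (N+1-k),
            ((-1 : R) ^ k * ((vi R v m c ^ (-(k : ℤ)) : Rˣ) : R)
                * ((vi R v m c ^ (-(((N-k-l)*(N-l) : ℕ) : ℤ)) : Rˣ) : R)
                * qbinom R v (N-l) k) •
              (Ep R v m n c j (N-l) * Ep R v m n i j l * Ep R v m n i c (N-l)) := by
    intro k hk
    rw [Finset.mem_range] at hk
    have e5NK : Ep R v m n i c N * Ep R v m n c j (N-k)
        = ∑ l ∈ Finset.range (N+1-k),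
            ((vi R v m c ^ (-((((N-k) - l) * (N - l) : ℕ)) : ℤ) : Rˣ) : R) •
              (Ep R v m n c j (N-k-l) * Ep R v m n i j l * Ep R v m n i c (N-l)) := by
      rw [Ep_e5 R v m n N (N-k) h1 h2 h3 h4,
        show min N (N-k) + 1 = N+1-k from by omega]
    rw [mul_assoc, e5NK, Finset.mul_sum, Finset.smul_sum]
    refine Finset.sum_congr rfl fun l hl => ?_
    rw [Finset.mem_range] at hl
    rw [mul_smul_comm, smul_smul,
      show Ep R v m n c j k * (Ep R v m n c j (N-k-l) * Ep R v m n i j l * Ep R v m n i c (N-l))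
        = (Ep R v m n c j k * Ep R v m n c j (N-k-l)) * Ep R v m n i j l * Ep R v m n i c (N-l)
        from by rw [← mul_assoc, ← mul_assoc],
      Ep_e1 R v m n k (N-k-l) hmemY,
      show (N-k-l) + k = N - l from by omega,
      show k + (N-k-l) = N - l from by omega,
      smul_mul_assoc, smul_mul_assoc, smul_smul]
  calc Ep R v m n i j N
      = ∑ l ∈ Finset.range (N+1), (if l = N then (1:R) else 0) •
          (Ep R v m n c j (N-l) * Ep R v m n i j l * Ep R v m n i c (N-l)) := by
        rw [Finset.sum_congr rfl (fun l (hl : l ∈ Finset.range (N+1)) => by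
          rw [ite_smul, one_smul, zero_smul]),
          Finset.sum_ite_eq' (Finset.range (N+1)) N, if_pos (by simp)]
        rw [Nat.sub_self, Ep_zero R v m n hmemY,
          Ep_zero R v m n (mem_I m n h1 h2 (by omega)), one_mul, mul_one]
    _ = ∑ l ∈ Finset.range (N+1), (∑ k ∈ Finset.range (N+1-l),
            ((-1 : R) ^ k * ((vi R v m c ^ (-(k : ℤ)) : Rˣ) : R)
                * ((vi R v m c ^ (-(((N-k-l)*(N-l) : ℕ) : ℤ)) : Rˣ) : R)
                * qbinom R v (N-l) k)) •
          (Ep R v m n c j (N-l) * Ep R v m n i j l * Ep R v m n i c (N-l)) := by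
        refine Finset.sum_congr rfl fun l hl => ?_
        rw [Finset.mem_range] at hl
        congr 1
        rw [show N+1-l = (N-l)+1 from by omega]
        rw [Finset.sum_congr rfl (fun k (hk : k ∈ Finset.range ((N-l)+1)) => by
          rw [show N-k-l = (N-l)-k from by omega])]
        rw [key_sum R v (vi R v m c) hu (N-l)]
        by_cases hlN : l = N
        · rw [hlN, if_pos rfl, if_pos (show N - N = 0 from by omega)]
        · rw [if_neg hlN, if_neg (show ¬ N - l = 0 from by omega)]
    _ = ∑ l ∈ Finset.range (N+1), ∑ k ∈ Finset.range (N+1-l),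
            (((-1 : R) ^ k * ((vi R v m c ^ (-(k : ℤ)) : Rˣ) : R)
                * ((vi R v m c ^ (-(((N-k-l)*(N-l) : ℕ) : ℤ)) : Rˣ) : R)
                * qbinom R v (N-l) k) •
          (Ep R v m n c j (N-l) * Ep R v m n i j l * Ep R v m n i c (N-l))) := by
        refine Finset.sum_congr rfl fun l hl => ?_
        rw [Finset.sum_smul]
    _ = ∑ k ∈ Finset.range (N+1), ∑ l ∈ Finset.range (N+1-k),
            (((-1 : R) ^ k * ((vi R v m c ^ (-(k : ℤ)) : Rˣ) : R)
                * ((vi R v m c ^ (-(((N-k-l)*(N-l) : ℕ) : ℤ)) : Rˣ) : R)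
                * qbinom R v (N-l) k) •
          (Ep R v m n c j (N-l) * Ep R v m n i j l * Ep R v m n i c (N-l))) :=
        (tri N _).symm
    _ = ∑ k ∈ Finset.range (N + 1),
          ((-1 : R) ^ k * ((vi R v m c ^ (-(k : ℤ)) : Rˣ) : R)) •
            (Ep R v m n c j k * Ep R v m n i c N * Ep R v m n c j (N - k)) :=
        (Finset.sum_congr rfl hstep).symm

lemma part3 {i c j : ℕ} (h1 : 1 ≤ i) (h2 : i < c) (h3 : c < j) (h4 : j ≤ m+n) (N : ℕ) :
    Ep R v m n i j N
      = ∑ k ∈ Finset.range (N + 1),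
          ((-1 : R) ^ k * ((vi R v m c ^ (-(k : ℤ)) : Rˣ) : R)) •
            (Ep R v m n i c (N - k) * Ep R v m n c j N * Ep R v m n i c k) := by
  have hu := vi_cases R v m c
  have hmemX : inI0 m n (i,c) ∨ inI1 m n (i,c) := mem_I m n h1 h2 (by omega)
  have hmemY : inI0 m n (c,j) ∨ inI1 m n (c,j) := mem_I m n (by omega) h3 h4
  have hstep : ∀ k ∈ Finset.range (N+1),
      ((-1 : R) ^ k * ((vi R v m c ^ (-(k : ℤ)) : Rˣ) : R)) •
            (Ep R v m n i c (N - k) * Ep R v m n c j N * Ep R v m n i c k)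
        = ∑ l ∈ Finset.range (N+1-k),
            ((-1 : R) ^ k * ((vi R v m c ^ (-(k : ℤ)) : Rˣ) : R)
                * ((vi R v m c ^ (-(((N-l)*(N-k-l) : ℕ) : ℤ)) : Rˣ) : R)
                * qbinom R v (N-l) k) •
              (Ep R v m n c j (N-l) * Ep R v m n i j l * Ep R v m n i c (N-l)) := by
    intro k hk
    rw [Finset.mem_range] at hk
    have e5NK : Ep R v m n i c (N-k) * Ep R v m n c j N
        = ∑ l ∈ Finset.range (N+1-k),
            ((vi R v m c ^ (-(((N - l) * (N - k - l) : ℕ)) : ℤ) : Rˣ) : R) •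
              (Ep R v m n c j (N-l) * Ep R v m n i j l * Ep R v m n i c (N-k-l)) := by
      rw [Ep_e5 R v m n (N-k) N h1 h2 h3 h4,
        show min (N-k) N + 1 = N+1-k from by omega]
    rw [e5NK, Finset.sum_mul, Finset.smul_sum]
    refine Finset.sum_congr rfl fun l hl => ?_
    rw [Finset.mem_range] at hl
    have hqb : qbinom R v (N-l) (N-k-l) = qbinom R v (N-l) k := by
      have h5 := qb_symm R v (N-l) k (by omega)
      rw [show N-l-k = N-k-l from by omega] at h5
      exact h5.symm
    rw [smul_mul_assoc, mul_assoc,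
      Ep_e1 R v m n (N-k-l) k hmemX,
      show k + (N-k-l) = N-l from by omega,
      show (N-k-l) + k = N-l from by omega,
      hqb, mul_smul_comm, smul_smul, smul_smul]
  calc Ep R v m n i j N
      = ∑ l ∈ Finset.range (N+1), (if l = N then (1:R) else 0) •
          (Ep R v m n c j (N-l) * Ep R v m n i j l * Ep R v m n i c (N-l)) := by
        rw [Finset.sum_congr rfl (fun l (hl : l ∈ Finset.range (N+1)) => by
          rw [ite_smul, one_smul, zero_smul]),
          Finset.sum_ite_eq' (Finset.range (N+1)) N, if_pos (by simp)]
        rw [Nat.sub_self, Ep_zero R v m n hmemY, Ep_zero R v m n hmemX, one_mul, mul_one]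
    _ = ∑ l ∈ Finset.range (N+1), (∑ k ∈ Finset.range (N+1-l),
            ((-1 : R) ^ k * ((vi R v m c ^ (-(k : ℤ)) : Rˣ) : R)
                * ((vi R v m c ^ (-(((N-l)*(N-k-l) : ℕ) : ℤ)) : Rˣ) : R)
                * qbinom R v (N-l) k)) •
          (Ep R v m n c j (N-l) * Ep R v m n i j l * Ep R v m n i c (N-l)) := by
        refine Finset.sum_congr rfl fun l hl => ?_
        rw [Finset.mem_range] at hl
        congr 1
        rw [show N+1-l = (N-l)+1 from by omega]
        rw [Finset.sum_congr rfl (fun k (hk : k ∈ Finset.range ((N-l)+1)) => by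
          rw [show (N-l)*(N-k-l) = ((N-l)-k)*(N-l) from by
            rw [show N-k-l = (N-l)-k from by omega, Nat.mul_comm]])]
        rw [key_sum R v (vi R v m c) hu (N-l)]
        by_cases hlN : l = N
        · rw [hlN, if_pos rfl, if_pos (show N - N = 0 from by omega)]
        · rw [if_neg hlN, if_neg (show ¬ N - l = 0 from by omega)]
    _ = ∑ l ∈ Finset.range (N+1), ∑ k ∈ Finset.range (N+1-l),
            (((-1 : R) ^ k * ((vi R v m c ^ (-(k : ℤ)) : Rˣ) : R)
                * ((vi R v m c ^ (-(((N-l)*(N-k-l) : ℕ) : ℤ)) : Rˣ) : R)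
                * qbinom R v (N-l) k) •
          (Ep R v m n c j (N-l) * Ep R v m n i j l * Ep R v m n i c (N-l))) := by
        refine Finset.sum_congr rfl fun l hl => ?_
        rw [Finset.sum_smul]
    _ = ∑ k ∈ Finset.range (N+1), ∑ l ∈ Finset.range (N+1-k),
            (((-1 : R) ^ k * ((vi R v m c ^ (-(k : ℤ)) : Rˣ) : R)
                * ((vi R v m c ^ (-(((N-l)*(N-k-l) : ℕ) : ℤ)) : Rˣ) : R)
                * qbinom R v (N-l) k) •
          (Ep R v m n c j (N-l) * Ep R v m n i j l * Ep R v m n i c (N-l))) :=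
        (tri N _).symm
    _ = ∑ k ∈ Finset.range (N + 1),
          ((-1 : R) ^ k * ((vi R v m c ^ (-(k : ℤ)) : Rˣ) : R)) •
            (Ep R v m n i c (N - k) * Ep R v m n c j N * Ep R v m n i c k) :=
        (Finset.sum_congr rfl hstep).symm

lemma part2 {i c j : ℕ} (h1 : 1 ≤ i) (h2 : i < c) (h3 : c < j) (h4 : j ≤ m+n) (M N : ℕ) :
    Ep R v m n i c M * Ep R v m n c j (M + N) * Ep R v m n i c N =
      Ep R v m n c j N * Ep R v m n i c (M + N) * Ep R v m n c j M := by
  have hmemX : inI0 m n (i,c) ∨ inI1 m n (i,c) := mem_I m n h1 h2 (by omega)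
  have hmemY : inI0 m n (c,j) ∨ inI1 m n (c,j) := mem_I m n (by omega) h3 h4
  have hL : Ep R v m n i c M * Ep R v m n c j (M + N) * Ep R v m n i c N
      = ∑ k ∈ Finset.range (M+1),
          (((vi R v m c ^ (-(((M + N - k) * (M - k) : ℕ) : ℤ)) : Rˣ) : R)
              * qbinom R v (M+N-k) N) •
            (Ep R v m n c j (M+N-k) * Ep R v m n i j k * Ep R v m n i c (M+N-k)) := by
    rw [Ep_e5 R v m n M (M+N) h1 h2 h3 h4,
      show min M (M+N) + 1 = M+1 from by omega, Finset.sum_mul]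
    refine Finset.sum_congr rfl fun k hk => ?_
    rw [Finset.mem_range] at hk
    have hqb : qbinom R v (M+N-k) (M-k) = qbinom R v (M+N-k) N := by
      have h5 := qb_symm R v (M+N-k) (M-k) (by omega)
      rw [show M+N-k-(M-k) = N from by omega] at h5
      exact h5
    rw [smul_mul_assoc, mul_assoc, Ep_e1 R v m n (M-k) N hmemX,
      show N + (M-k) = M+N-k from by omega,
      show (M-k) + N = M+N-k from by omega,
      hqb, mul_smul_comm, smul_smul]
  have hR : Ep R v m n c j N * Ep R v m n i c (M + N) * Ep R v m n c j M
      = ∑ k ∈ Finset.range (M+1),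
          (((vi R v m c ^ (-(((M + N - k) * (M - k) : ℕ) : ℤ)) : Rˣ) : R)
              * qbinom R v (M+N-k) N) •
            (Ep R v m n c j (M+N-k) * Ep R v m n i j k * Ep R v m n i c (M+N-k)) := by
    rw [mul_assoc, Ep_e5 R v m n (M+N) M h1 h2 h3 h4,
      show min (M+N) M + 1 = M+1 from by omega, Finset.mul_sum]
    refine Finset.sum_congr rfl fun k hk => ?_
    rw [Finset.mem_range] at hk
    rw [mul_smul_comm,
      show Ep R v m n c j N *
            (Ep R v m n c j (M-k) * Ep R v m n i j k * Ep R v m n i c (M+N-k))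
          = (Ep R v m n c j N * Ep R v m n c j (M-k)) * Ep R v m n i j k
              * Ep R v m n i c (M+N-k) from by rw [← mul_assoc, ← mul_assoc],
      Ep_e1 R v m n N (M-k) hmemY,
      show (M-k) + N = M+N-k from by omega,
      show N + (M-k) = M+N-k from by omega,
      smul_mul_assoc, smul_mul_assoc, smul_smul,
      show (M-k) * (M+N-k) = (M+N-k)*(M-k) from Nat.mul_comm _ _]
  rw [hL, hR]

lemma part5 {i s j t : ℕ} (h1 : 1 ≤ i) (h2 : i < s) (h3 : s < j) (h4 : j < t)
    (h5t : t ≤ m+n) :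
    Ep R v m n i j 1 * Ep R v m n s t 1 -
        (if inI1 m n (i, j) ∧ inI1 m n (s, t) then (-1 : R) else 1) •
          (Ep R v m n s t 1 * Ep R v m n i j 1) =
      (((vi R v m j : Rˣ) : R) - (((vi R v m j)⁻¹ : Rˣ) : R)) •
        (Ep R v m n i t 1 * Ep R v m n s j 1) := by
  have hmst : inI0 m n (s,t) ∨ inI1 m n (s,t) := mem_I m n (by omega) (by omega) h5t
  have hmjt : inI0 m n (j,t) ∨ inI1 m n (j,t) := mem_I m n (by omega) h4 h5t
  have hmsj : inI0 m n (s,j) ∨ inI1 m n (s,j) := mem_I m n (by omega) h3 (by omega)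
  have hmij : inI0 m n (i,j) ∨ inI1 m n (i,j) := mem_I m n h1 (by omega) (by omega)
  have hmit : inI0 m n (i,t) ∨ inI1 m n (i,t) := mem_I m n h1 (by omega) h5t
  set S : R := if inI1 m n (s,j) then (-1 : R) else 1 with hS
  set uv : R := ((vi R v m j : Rˣ) : R) with huv
  set w : R := (((vi R v m j)⁻¹ : Rˣ) : R) with hw
  have hwu : w * uv = 1 := by
    rw [hw, huv, ← Units.val_mul, inv_mul_cancel, Units.val_one]
  -- (R1)
  have hd0 := Ep_e5 R v m n 1 1 (show 1 ≤ s by omega) h3 h4 h5t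
  rw [show min 1 1 + 1 = 2 from rfl, Finset.sum_range_succ, Finset.sum_range_one] at hd0
  simp only [Nat.sub_self, Nat.sub_zero, Nat.mul_one, Nat.one_mul, Nat.mul_zero,
    Nat.zero_mul, Nat.cast_one, Nat.cast_zero, neg_zero, zpow_zero, Units.val_one,
    one_smul, zpow_neg_one, Ep_zero R v m n hmst, Ep_zero R v m n hmjt,
    Ep_zero R v m n hmsj, one_mul, mul_one] at hd0
  -- hd0 : b * c' = w • (c' * b) + d
  have hd' : Ep R v m n s t 1 = Ep R v m n s j 1 * Ep R v m n j t 1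
      - w • (Ep R v m n j t 1 * Ep R v m n s j 1) := by
    rw [hd0]; module
  -- (R2)
  have he0 := Ep_e5 R v m n 1 1 h1 (show i < j by omega) h4 h5t
  rw [show min 1 1 + 1 = 2 from rfl, Finset.sum_range_succ, Finset.sum_range_one] at he0
  simp only [Nat.sub_self, Nat.sub_zero, Nat.mul_one, Nat.one_mul, Nat.mul_zero,
    Nat.zero_mul, Nat.cast_one, Nat.cast_zero, neg_zero, zpow_zero, Units.val_one,
    one_smul, zpow_neg_one, Ep_zero R v m n hmit, Ep_zero R v m n hmjt,
    Ep_zero R v m n hmij, one_mul, mul_one] at he0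
  -- he0 : a * c' = w • (c' * a) + e
  have hca : Ep R v m n j t 1 * Ep R v m n i j 1
      = uv • (Ep R v m n i j 1 * Ep R v m n j t 1) - uv • Ep R v m n i t 1 := by
    have h' : uv • (Ep R v m n i j 1 * Ep R v m n j t 1)
        = uv • (w • (Ep R v m n j t 1 * Ep R v m n i j 1) + Ep R v m n i t 1) := by
      rw [he0]
    rw [smul_add, smul_smul, mul_comm uv w, hwu, one_smul] at h'
    rw [h']; module
  -- (R3)
  have hba := Ep_e4 R v m n 1 1 h1 h2 h3 (by omega)
  simp only [Nat.mul_one, pow_one, mul_one, one_mul] at hba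
  rw [← hS, ← hw] at hba
  -- hba : b * a = (S * w) • (a * b)
  -- (R4)
  have heb := Ep_e2 R v m n 1 1 (i := i) (s := s) (t := j) (j := t) h1 (by omega) h5t
    (by omega) (Or.inl ⟨h2, h3, h4⟩)
  simp only [Nat.mul_one, pow_one, mul_one, one_mul] at heb
  have hiff2 : (inI1 m n (i,t) ∧ inI1 m n (s,j)) ↔ inI1 m n (s,j) := by
    unfold inI1
    dsimp only
    omega
  rw [if_congr hiff2 rfl rfl, ← hS] at heb
  -- heb : e * b = S • (b * e)
  have hiff1 : (inI1 m n (i,j) ∧ inI1 m n (s,t)) ↔ inI1 m n (s,j) := by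
    unfold inI1
    dsimp only
    omega
  rw [if_congr hiff1 rfl rfl, ← hS]
  -- main computation
  have had : Ep R v m n i j 1 * Ep R v m n s t 1
      = (Ep R v m n i j 1 * Ep R v m n s j 1) * Ep R v m n j t 1
        - (w*w) • (Ep R v m n j t 1 * (Ep R v m n i j 1 * Ep R v m n s j 1))
        - w • (Ep R v m n i t 1 * Ep R v m n s j 1) := by
    rw [hd', mul_sub, mul_smul_comm, ← mul_assoc, ← mul_assoc, he0, add_mul,
      smul_mul_assoc, mul_assoc (Ep R v m n j t 1) (Ep R v m n i j 1)]
    module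
  have hda : Ep R v m n s t 1 * Ep R v m n i j 1
      = S • ((Ep R v m n i j 1 * Ep R v m n s j 1) * Ep R v m n j t 1)
        - uv • (Ep R v m n s j 1 * Ep R v m n i t 1)
        - (w*(S*w)) • (Ep R v m n j t 1 * (Ep R v m n i j 1 * Ep R v m n s j 1)) := by
    rw [hd', sub_mul, smul_mul_assoc,
      mul_assoc (Ep R v m n s j 1) (Ep R v m n j t 1) (Ep R v m n i j 1),
      mul_assoc (Ep R v m n j t 1) (Ep R v m n s j 1) (Ep R v m n i j 1),
      hca, mul_sub, mul_smul_comm, mul_smul_comm,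
      ← mul_assoc (Ep R v m n s j 1) (Ep R v m n i j 1) (Ep R v m n j t 1),
      hba, smul_mul_assoc, smul_smul, mul_smul_comm, smul_smul,
      show uv * (S*w) = S from by rw [mul_comm uv (S*w), mul_assoc, hwu, mul_one]]
  rw [had, hda, heb]
  by_cases hI : inI1 m n (s,j)
  · rw [hS, if_pos hI]
    module
  · rw [hS, if_neg hI]
    module

lemma key_sum2 (u : Rˣ) (hu : u = v ∨ u = v⁻¹) (N M s : ℕ) (hsN : s ≤ N) (hsM : s ≤ M) :
    ∑ k ∈ Finset.range (s+1),
        (-1:R)^k * ((u ^ ((k : ℤ) + ((N - k) * (M - k) : ℕ)) : Rˣ) : R)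
          * ((u ^ ((M-k)*k) : Rˣ) : R)
          * ((u ^ (-(((N-s)*(M-s) : ℕ) : ℤ)) : Rˣ) : R)
          * ((u ^ ((N-s)*k) : Rˣ) : R)
          * qbinom R v s k
      = if s = 0 then 1 else 0 := by
  have hw : u⁻¹ = v ∨ u⁻¹ = v⁻¹ := by
    rcases hu with hu | hu
    · exact Or.inr (by rw [hu])
    · exact Or.inl (by rw [hu, inv_inv])
  have hterm : ∀ k ∈ Finset.range (s+1),
      (-1:R)^k * ((u ^ ((k : ℤ) + ((N - k) * (M - k) : ℕ)) : Rˣ) : R)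
          * ((u ^ ((M-k)*k) : Rˣ) : R)
          * ((u ^ (-(((N-s)*(M-s) : ℕ) : ℤ)) : Rˣ) : R)
          * ((u ^ ((N-s)*k) : Rˣ) : R)
          * qbinom R v s k
        = ((u ^ (s*(N+M-s)) : Rˣ) : R)
            * ((-1:R)^k * ((u⁻¹ ^ (k*(s-1)) : Rˣ) : R) * qbinom R v s k) := by
    intro k hk
    rw [Finset.mem_range] at hk
    have hu2 : (u ^ ((k : ℤ) + ((N - k) * (M - k) : ℕ)) : Rˣ)
          * u ^ (((((M-k)*k : ℕ)) : ℤ))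
          * u ^ (-(((N-s)*(M-s) : ℕ) : ℤ))
          * u ^ ((((N-s)*k : ℕ)) : ℤ)
        = u ^ (((s*(N+M-s) : ℕ)) : ℤ) * u ^ (-((k*(s-1) : ℕ) : ℤ)) := by
      rw [← zpow_add, ← zpow_add, ← zpow_add, ← zpow_add]
      congr 1
      rcases Nat.eq_zero_or_pos s with hs | hs
      · subst hs
        interval_cases k
        push_cast
        ring
      · push_cast [Nat.cast_sub (by omega : k ≤ N), Nat.cast_sub (by omega : k ≤ M),
          Nat.cast_sub hsN, Nat.cast_sub hsM, Nat.cast_sub (by omega : 1 ≤ s),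
          Nat.cast_sub (by omega : s ≤ N + M)]
        ring
    have hR : ((u ^ ((k : ℤ) + ((N - k) * (M - k) : ℕ)) : Rˣ) : R)
          * ((u ^ ((M-k)*k) : Rˣ) : R)
          * ((u ^ (-(((N-s)*(M-s) : ℕ) : ℤ)) : Rˣ) : R)
          * ((u ^ ((N-s)*k) : Rˣ) : R)
        = ((u ^ (s*(N+M-s)) : Rˣ) : R) * ((u⁻¹ ^ (k*(s-1)) : Rˣ) : R) := by
      have h2 : ((u⁻¹ ^ (k*(s-1)) : Rˣ)) = u ^ (-((k*(s-1) : ℕ) : ℤ)) := by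
        rw [zpow_neg, zpow_natCast, inv_pow]
      rw [h2, ← Units.val_mul, ← Units.val_mul, ← Units.val_mul,
        show ((u ^ ((M-k)*k) : Rˣ)) = u ^ (((((M-k)*k : ℕ)) : ℤ)) from by rw [zpow_natCast],
        show ((u ^ ((N-s)*k) : Rˣ)) = u ^ (((((N-s)*k : ℕ)) : ℤ)) from by rw [zpow_natCast],
        hu2, Units.val_mul]
      rw [show ((u ^ (s*(N+M-s)) : Rˣ)) = u ^ (((s*(N+M-s) : ℕ)) : ℤ) from by rw [zpow_natCast]]
    linear_combination ((-1:R)^k * qbinom R v s k) * hR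
  rw [Finset.sum_congr rfl hterm, ← Finset.mul_sum, qb_ortho R v u⁻¹ hw s]
  rcases Nat.eq_zero_or_pos s with hs | hs
  · subst hs; simp
  · rw [if_neg (by omega : ¬ s = 0), mul_zero]

lemma part4A {i c j : ℕ} (h1 : 1 ≤ i) (h2 : i < c) (h3 : c < j) (h4 : j ≤ m+n)
    (hnic : ¬ inI1 m n (i,c)) (hncj : ¬ inI1 m n (c,j))
    (hvic : vi R v m i = vi R v m c) (hvjc : vi R v m j = vi R v m c) (N M : ℕ) :
    Ep R v m n c j N * Ep R v m n i c M =
      ∑ k ∈ Finset.range (min N M + 1),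
        ((-1 : R) ^ k *
            ((vi R v m c ^ ((k : ℤ) + ((N - k) * (M - k) : ℕ)) : Rˣ) : R)) •
          (Ep R v m n i c (M - k) * Ep R v m n i j k * Ep R v m n c j (N - k)) := by
  have hu := vi_cases R v m c
  have hmemX : inI0 m n (i,c) ∨ inI1 m n (i,c) := mem_I m n h1 h2 (by omega)
  have hmemY : inI0 m n (c,j) ∨ inI1 m n (c,j) := mem_I m n (by omega) h3 h4
  have hmemZ : inI0 m n (i,j) ∨ inI1 m n (i,j) := mem_I m n h1 (by omega) h4
  -- commutation X-Z
  have hXZ : ∀ A B : ℕ, Ep R v m n i c A * Ep R v m n i j B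
      = ((vi R v m c ^ (A*B) : Rˣ) : R) • (Ep R v m n i j B * Ep R v m n i c A) := by
    intro A B
    have h := Ep_e3 R v m n A B h1 h2 h3 h4
    rw [if_neg hnic, one_mul, hvic, ← Units.val_pow_eq_pow_val] at h
    exact h
  -- commutation Z-Y
  have hZY : ∀ A B : ℕ, Ep R v m n i j B * Ep R v m n c j A
      = ((vi R v m c ^ (A*B) : Rˣ) : R) • (Ep R v m n c j A * Ep R v m n i j B) := by
    intro A B
    have h := Ep_e4 R v m n A B h1 h2 h3 h4
    rw [if_neg hncj, one_mul, hvjc, ← Units.val_pow_eq_pow_val] at h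
    rw [h, smul_smul, ← Units.val_mul, ← mul_pow, mul_inv_cancel, one_pow,
      Units.val_one, one_smul]
  have hstep : ∀ k ∈ Finset.range (min N M + 1),
      ((-1 : R) ^ k *
            ((vi R v m c ^ ((k : ℤ) + ((N - k) * (M - k) : ℕ)) : Rˣ) : R)) •
          (Ep R v m n i c (M - k) * Ep R v m n i j k * Ep R v m n c j (N - k))
        = ∑ l ∈ Finset.range (min N M + 1 - k),
            ((-1 : R) ^ k *
                ((vi R v m c ^ ((k : ℤ) + ((N - k) * (M - k) : ℕ)) : Rˣ) : R)
              * ((vi R v m c ^ ((M-k)*k) : Rˣ) : R)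
              * ((vi R v m c ^ (-(((N-k-l)*(M-k-l) : ℕ) : ℤ)) : Rˣ) : R)
              * ((vi R v m c ^ ((N-k-l)*k) : Rˣ) : R)
              * qbinom R v (l+k) k) •
            (Ep R v m n c j (N-k-l) * Ep R v m n i j (k+l) * Ep R v m n i c (M-k-l)) := by
    intro k hk
    rw [Finset.mem_range] at hk
    have e5k : Ep R v m n i c (M-k) * Ep R v m n c j (N-k)
        = ∑ l ∈ Finset.range (min N M + 1 - k),
            ((vi R v m c ^ (-((((N-k) - l) * ((M-k) - l) : ℕ)) : ℤ) : Rˣ) : R) •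
              (Ep R v m n c j (N-k-l) * Ep R v m n i j l * Ep R v m n i c (M-k-l)) := by
      rw [Ep_e5 R v m n (M-k) (N-k) h1 h2 h3 h4,
        show min (M-k) (N-k) + 1 = min N M + 1 - k from by omega]
    rw [hXZ (M-k) k, smul_mul_assoc, mul_assoc, e5k, Finset.mul_sum, Finset.smul_sum,
      Finset.smul_sum]
    refine Finset.sum_congr rfl fun l hl => ?_
    rw [Finset.mem_range] at hl
    rw [mul_smul_comm, ← mul_assoc, ← mul_assoc, hZY (N-k-l) k,
      smul_mul_assoc, smul_mul_assoc,
      mul_assoc (Ep R v m n c j (N-k-l)) (Ep R v m n i j k) (Ep R v m n i j l),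
      Ep_e1 R v m n k l hmemZ, mul_smul_comm, smul_mul_assoc,
      smul_smul, smul_smul, smul_smul, smul_smul]
  calc Ep R v m n c j N * Ep R v m n i c M
      = ∑ s ∈ Finset.range (min N M + 1), (if s = 0 then (1:R) else 0) •
          (Ep R v m n c j (N-s) * Ep R v m n i j s * Ep R v m n i c (M-s)) := by
        rw [Finset.sum_congr rfl (fun s (hs : s ∈ Finset.range (min N M + 1)) => by
          rw [ite_smul, one_smul, zero_smul]),
          Finset.sum_ite_eq' (Finset.range (min N M + 1)) 0, if_pos (by simp)]
        rw [Nat.sub_zero, Nat.sub_zero, Ep_zero R v m n hmemZ, mul_one]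
    _ = ∑ s ∈ Finset.range (min N M + 1), (∑ k ∈ Finset.range (s+1),
            ((-1 : R) ^ k *
                ((vi R v m c ^ ((k : ℤ) + ((N - k) * (M - k) : ℕ)) : Rˣ) : R)
              * ((vi R v m c ^ ((M-k)*k) : Rˣ) : R)
              * ((vi R v m c ^ (-(((N-s)*(M-s) : ℕ) : ℤ)) : Rˣ) : R)
              * ((vi R v m c ^ ((N-s)*k) : Rˣ) : R)
              * qbinom R v s k)) •
          (Ep R v m n c j (N-s) * Ep R v m n i j s * Ep R v m n i c (M-s)) := by
        refine Finset.sum_congr rfl fun s hs => ?_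
        rw [Finset.mem_range] at hs
        congr 1
        exact (key_sum2 R v (vi R v m c) hu N M s (by omega) (by omega)).symm
    _ = ∑ s ∈ Finset.range (min N M + 1), ∑ k ∈ Finset.range (s+1),
            (((-1 : R) ^ k *
                ((vi R v m c ^ ((k : ℤ) + ((N - k) * (M - k) : ℕ)) : Rˣ) : R)
              * ((vi R v m c ^ ((M-k)*k) : Rˣ) : R)
              * ((vi R v m c ^ (-(((N-s)*(M-s) : ℕ) : ℤ)) : Rˣ) : R)
              * ((vi R v m c ^ ((N-s)*k) : Rˣ) : R)
              * qbinom R v s k) •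
          (Ep R v m n c j (N-s) * Ep R v m n i j s * Ep R v m n i c (M-s))) := by
        refine Finset.sum_congr rfl fun s hs => ?_
        rw [Finset.sum_smul]
    _ = ∑ k ∈ Finset.range (min N M + 1), ∑ l ∈ Finset.range (min N M + 1 - k),
            (((-1 : R) ^ k *
                ((vi R v m c ^ ((k : ℤ) + ((N - k) * (M - k) : ℕ)) : Rˣ) : R)
              * ((vi R v m c ^ ((M-k)*k) : Rˣ) : R)
              * ((vi R v m c ^ (-(((N-k-l)*(M-k-l) : ℕ) : ℤ)) : Rˣ) : R)
              * ((vi R v m c ^ ((N-k-l)*k) : Rˣ) : R)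
              * qbinom R v (l+k) k) •
          (Ep R v m n c j (N-k-l) * Ep R v m n i j (k+l) * Ep R v m n i c (M-k-l))) := by
        rw [antidiag (min N M) _]
        refine Finset.sum_congr rfl fun s hs => Finset.sum_congr rfl fun k hk => ?_
        rw [Finset.mem_range] at hs hk
        rw [show N-k-(s-k) = N-s from by omega, show M-k-(s-k) = M-s from by omega,
          show k+(s-k) = s from by omega, show s-k+k = s from by omega]
    _ = ∑ k ∈ Finset.range (min N M + 1),
          ((-1 : R) ^ k *
              ((vi R v m c ^ ((k : ℤ) + ((N - k) * (M - k) : ℕ)) : Rˣ) : R)) •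
            (Ep R v m n i c (M - k) * Ep R v m n i j k * Ep R v m n c j (N - k)) :=
        (Finset.sum_congr rfl hstep).symm

lemma part4B {i c j : ℕ} (h1 : 1 ≤ i) (h2 : i < c) (h3 : c < j) (h4 : j ≤ m+n)
    (hBi : i ≤ m) (hBc : m < c) (N M : ℕ) :
    Ep R v m n c j N * Ep R v m n i c M =
      ∑ k ∈ Finset.range (min N M + 1),
        ((-1 : R) ^ k *
            ((vi R v m c ^ ((k : ℤ) + ((N - k) * (M - k) : ℕ)) : Rˣ) : R)) •
          (Ep R v m n i c (M - k) * Ep R v m n i j k * Ep R v m n c j (N - k)) := by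
  have hmemX : inI0 m n (i,c) ∨ inI1 m n (i,c) := mem_I m n h1 h2 (by omega)
  have hmemY : inI0 m n (c,j) ∨ inI1 m n (c,j) := mem_I m n (by omega) h3 h4
  have hmemZ : inI0 m n (i,j) ∨ inI1 m n (i,j) := mem_I m n h1 (by omega) h4
  have hnI0ic : ¬ inI0 m n (i,c) := by unfold inI0; dsimp only; omega
  have hnI0ij : ¬ inI0 m n (i,j) := by unfold inI0; dsimp only; omega
  have hncj : ¬ inI1 m n (c,j) := by unfold inI1; dsimp only; omega
  have hvjc : vi R v m j = vi R v m c := by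
    unfold vi; rw [if_neg (by omega), if_neg (by omega)]
  -- Z1 * X1 = 0
  have hZX : Ep R v m n i j 1 * Ep R v m n i c 1 = 0 := by
    have h := Ep_e5 R v m n 2 1 h1 h2 h3 h4
    rw [show min 2 1 + 1 = 2 from rfl, Finset.sum_range_succ, Finset.sum_range_one] at h
    simp only [Nat.sub_zero, Nat.sub_self, Nat.reduceSub, Nat.mul_one, Nat.one_mul,
      Nat.mul_zero, Nat.zero_mul, Nat.cast_zero, neg_zero, zpow_zero, Units.val_one,
      one_smul, Ep_zero R v m n hmemY, one_mul, mul_one] at h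
    rw [Ep_ne R v m n hnI0ic (by omega : 2 ≤ 2)] at h
    simp only [zero_mul, mul_zero, smul_zero, zero_add] at h
    exact h.symm
  -- X1 * Z1 = 0
  have hXZ0 : Ep R v m n i c 1 * Ep R v m n i j 1 = 0 := by
    have h := Ep_e3 R v m n 1 1 h1 h2 h3 h4
    rw [hZX, smul_zero] at h
    exact h
  rcases M with _ | M
  · -- M = 0
    rw [Nat.min_zero, Finset.sum_range_one]
    simp [Ep_zero R v m n hmemX, Ep_zero R v m n hmemZ]
  rcases M with _ | M
  · -- M = 1
    rcases N with _ | N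
    · rw [Nat.zero_min, Finset.sum_range_one]
      simp [Ep_zero R v m n hmemY, Ep_zero R v m n hmemZ]
    · -- N+1, M = 1
      rw [show min (N+1) 1 + 1 = 2 from by omega, Finset.sum_range_succ,
        Finset.sum_range_one]
      simp only [Nat.sub_zero, Nat.sub_self, Nat.reduceSub, Nat.mul_one, Nat.one_mul,
        Nat.mul_zero, Nat.zero_mul, Nat.add_sub_cancel, Nat.cast_zero, Nat.cast_one,
        zero_add, add_zero, neg_zero, zpow_zero, zpow_one, pow_zero, pow_one,
        Units.val_one, one_smul, one_mul, mul_one,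
        Ep_zero R v m n hmemX, Ep_zero R v m n hmemZ]
      have he5 := Ep_e5 R v m n 1 (N+1) h1 h2 h3 h4
      rw [show min 1 (N+1) + 1 = 2 from by omega, Finset.sum_range_succ,
        Finset.sum_range_one] at he5
      simp only [Nat.sub_zero, Nat.sub_self, Nat.reduceSub, Nat.mul_one, Nat.one_mul,
        Nat.mul_zero, Nat.zero_mul, Nat.add_sub_cancel, Nat.cast_zero, Nat.cast_one,
        zero_add, add_zero, neg_zero, zpow_zero, zpow_one, pow_zero, pow_one,
        Units.val_one, one_smul, one_mul, mul_one,
        Ep_zero R v m n hmemX, Ep_zero R v m n hmemZ] at he5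
      have hswap := Ep_e4 R v m n N 1 h1 h2 h3 h4
      rw [if_neg hncj, one_mul, hvjc, Nat.mul_one, ← Units.val_pow_eq_pow_val] at hswap
      have hc1 : ((vi R v m c ^ ((N+1 : ℕ) : ℤ) : Rˣ) : R)
          * ((vi R v m c ^ (-((N+1 : ℕ) : ℤ)) : Rˣ) : R) = 1 := by
        rw [← Units.val_mul, ← zpow_add,
          show ((N+1 : ℕ) : ℤ) + -((N+1 : ℕ) : ℤ) = 0 from by ring, zpow_zero,
          Units.val_one]
      have hc2 : ((vi R v m c ^ ((N+1 : ℕ) : ℤ) : Rˣ) : R)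
          * (((vi R v m c)⁻¹ ^ N : Rˣ) : R) = ((vi R v m c : Rˣ) : R) := by
        rw [← Units.val_mul]
        congr 1
        rw [zpow_natCast, pow_succ, inv_pow, mul_comm (vi R v m c ^ N), mul_assoc,
          mul_inv_cancel, mul_one]
      rw [he5, smul_add, smul_smul, hc1, one_smul, hswap, smul_smul, hc2]
      module
  · -- M ≥ 2
    rw [Ep_ne R v m n hnI0ic (by omega : 2 ≤ M + 1 + 1), mul_zero]
    symm
    apply Finset.sum_eq_zero
    intro k hk
    rw [Finset.mem_range] at hk
    by_cases hk2 : 2 ≤ k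
    · rw [Ep_ne R v m n hnI0ij hk2, mul_zero, zero_mul, smul_zero]
    · by_cases hMk : 2 ≤ M + 1 + 1 - k
      · rw [Ep_ne R v m n hnI0ic hMk, zero_mul, zero_mul, smul_zero]
      · have hk1 : k = 1 ∧ M = 0 := by omega
        obtain ⟨hk1, hM0⟩ := hk1
        subst hk1; subst hM0
        rw [show 0 + 1 + 1 - 1 = 1 from rfl, hXZ0, zero_mul, smul_zero]

lemma part4C {i c j : ℕ} (h1 : 1 ≤ i) (h2 : i < c) (h3 : c < j) (h4 : j ≤ m+n)
    (hCc : c ≤ m) (hCj : m < j) (N M : ℕ) :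
    Ep R v m n c j N * Ep R v m n i c M =
      ∑ k ∈ Finset.range (min N M + 1),
        ((-1 : R) ^ k *
            ((vi R v m c ^ ((k : ℤ) + ((N - k) * (M - k) : ℕ)) : Rˣ) : R)) •
          (Ep R v m n i c (M - k) * Ep R v m n i j k * Ep R v m n c j (N - k)) := by
  have hmemX : inI0 m n (i,c) ∨ inI1 m n (i,c) := mem_I m n h1 h2 (by omega)
  have hmemY : inI0 m n (c,j) ∨ inI1 m n (c,j) := mem_I m n (by omega) h3 h4
  have hmemZ : inI0 m n (i,j) ∨ inI1 m n (i,j) := mem_I m n h1 (by omega) h4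
  have hnI0cj : ¬ inI0 m n (c,j) := by unfold inI0; dsimp only; omega
  have hnI0ij : ¬ inI0 m n (i,j) := by unfold inI0; dsimp only; omega
  have hnic : ¬ inI1 m n (i,c) := by unfold inI1; dsimp only; omega
  have hI1cj : inI1 m n (c,j) := ⟨by omega, hCc, by omega, h4⟩
  have hvic : vi R v m i = vi R v m c := by
    unfold vi; rw [if_pos (by omega), if_pos (by omega)]
  -- Y1 * Z1 = 0
  have hYZ : Ep R v m n c j 1 * Ep R v m n i j 1 = 0 := by
    have h := Ep_e5 R v m n 1 2 h1 h2 h3 h4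
    rw [show min 1 2 + 1 = 2 from rfl, Finset.sum_range_succ, Finset.sum_range_one] at h
    simp only [Nat.sub_zero, Nat.sub_self, Nat.reduceSub, Nat.mul_one, Nat.one_mul,
      Nat.mul_zero, Nat.zero_mul, Nat.cast_zero, neg_zero, zpow_zero, Units.val_one,
      one_smul, Ep_zero R v m n hmemX, one_mul, mul_one] at h
    rw [Ep_ne R v m n hnI0cj (by omega : 2 ≤ 2)] at h
    simp only [zero_mul, mul_zero, smul_zero, zero_add] at h
    exact h.symm
  -- Z1 * Y1 = 0
  have hZY0 : Ep R v m n i j 1 * Ep R v m n c j 1 = 0 := by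
    have h := Ep_e4 R v m n 1 1 h1 h2 h3 h4
    rw [if_pos hI1cj, Nat.mul_one, pow_one] at h
    have hsc : ((-1:R) * ((vi R v m j : Rˣ) : R))
        * ((-1:R) * (((vi R v m j)⁻¹ : Rˣ) : R)) = 1 := by
      have hv1 : ((vi R v m j : Rˣ) : R) * (((vi R v m j)⁻¹ : Rˣ) : R) = 1 := by
        rw [← Units.val_mul, mul_inv_cancel, Units.val_one]
      linear_combination hv1
    calc Ep R v m n i j 1 * Ep R v m n c j 1
        = (((-1:R) * ((vi R v m j : Rˣ) : R))
            * ((-1:R) * (((vi R v m j)⁻¹ : Rˣ) : R))) •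
              (Ep R v m n i j 1 * Ep R v m n c j 1) := by rw [hsc, one_smul]
      _ = ((-1:R) * ((vi R v m j : Rˣ) : R)) • (((-1:R) * (((vi R v m j)⁻¹ : Rˣ) : R)) •
              (Ep R v m n i j 1 * Ep R v m n c j 1)) := by rw [smul_smul]
      _ = ((-1:R) * ((vi R v m j : Rˣ) : R)) • (Ep R v m n c j 1 * Ep R v m n i j 1) := by
            rw [← h]
      _ = 0 := by rw [hYZ, smul_zero]
  rcases N with _ | N
  · rw [Nat.zero_min, Finset.sum_range_one]
    simp [Ep_zero R v m n hmemY, Ep_zero R v m n hmemZ]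
  rcases N with _ | N
  · -- N = 1
    rcases M with _ | M
    · rw [Nat.min_zero, Finset.sum_range_one]
      simp [Ep_zero R v m n hmemX, Ep_zero R v m n hmemZ]
    · -- N = 1, M+1
      rw [show min 1 (M+1) + 1 = 2 from by omega, Finset.sum_range_succ,
        Finset.sum_range_one]
      simp only [Nat.sub_zero, Nat.sub_self, Nat.reduceSub, Nat.mul_one, Nat.one_mul,
        Nat.mul_zero, Nat.zero_mul, Nat.add_sub_cancel, Nat.cast_zero, Nat.cast_one,
        zero_add, add_zero, neg_zero, zpow_zero, zpow_one, pow_zero, pow_one,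
        Units.val_one, one_smul, one_mul, mul_one,
        Ep_zero R v m n hmemY, Ep_zero R v m n hmemZ]
      have he5 := Ep_e5 R v m n (M+1) 1 h1 h2 h3 h4
      rw [show min (M+1) 1 + 1 = 2 from by omega, Finset.sum_range_succ,
        Finset.sum_range_one] at he5
      simp only [Nat.sub_zero, Nat.sub_self, Nat.reduceSub, Nat.mul_one, Nat.one_mul,
        Nat.mul_zero, Nat.zero_mul, Nat.add_sub_cancel, Nat.cast_zero, Nat.cast_one,
        zero_add, add_zero, neg_zero, zpow_zero, zpow_one, pow_zero, pow_one,
        Units.val_one, one_smul, one_mul, mul_one,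
        Ep_zero R v m n hmemY, Ep_zero R v m n hmemZ] at he5
      have hswap := Ep_e3 R v m n M 1 h1 h2 h3 h4
      rw [if_neg hnic, one_mul, hvic, Nat.mul_one, ← Units.val_pow_eq_pow_val] at hswap
      have hc1 : ((vi R v m c ^ ((M+1 : ℕ) : ℤ) : Rˣ) : R)
          * ((vi R v m c ^ (-((M+1 : ℕ) : ℤ)) : Rˣ) : R) = 1 := by
        rw [← Units.val_mul, ← zpow_add,
          show ((M+1 : ℕ) : ℤ) + -((M+1 : ℕ) : ℤ) = 0 from by ring, zpow_zero,
          Units.val_one]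
      have hc2 : ((vi R v m c ^ ((M+1 : ℕ) : ℤ) : Rˣ) : R)
          = ((vi R v m c : Rˣ) : R) * ((vi R v m c ^ M : Rˣ) : R) := by
        rw [← Units.val_mul]
        congr 1
        rw [zpow_natCast, pow_succ, mul_comm]
      rw [he5, smul_add, smul_smul, hc1, one_smul, hswap, smul_smul, hc2]
      module
  · -- N ≥ 2
    rw [Ep_ne R v m n hnI0cj (by omega : 2 ≤ N + 1 + 1), zero_mul]
    symm
    apply Finset.sum_eq_zero
    intro k hk
    rw [Finset.mem_range] at hk
    by_cases hk2 : 2 ≤ k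
    · rw [Ep_ne R v m n hnI0ij hk2, mul_zero, zero_mul, smul_zero]
    · by_cases hNk : 2 ≤ N + 1 + 1 - k
      · rw [Ep_ne R v m n hnI0cj hNk, mul_zero, smul_zero]
      · have hk1 : k = 1 ∧ N = 0 := by omega
        obtain ⟨hk1, hN0⟩ := hk1
        subst hk1; subst hN0
        rw [show 0 + 1 + 1 - 1 = 1 from rfl,
          mul_assoc (Ep R v m n i c (M-1)) (Ep R v m n i j 1) (Ep R v m n c j 1),
          hZY0, mul_zero, smul_zero]

lemma part4 {i c j : ℕ} (h1 : 1 ≤ i) (h2 : i < c) (h3 : c < j) (h4 : j ≤ m+n) (N M : ℕ) :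
    Ep R v m n c j N * Ep R v m n i c M =
      ∑ k ∈ Finset.range (min N M + 1),
        ((-1 : R) ^ k *
            ((vi R v m c ^ ((k : ℤ) + ((N - k) * (M - k) : ℕ)) : Rˣ) : R)) •
          (Ep R v m n i c (M - k) * Ep R v m n i j k * Ep R v m n c j (N - k)) := by
  by_cases hB : i ≤ m ∧ m < c
  · exact part4B R v m n h1 h2 h3 h4 hB.1 hB.2 N M
  · by_cases hC : c ≤ m ∧ m < j
    · exact part4C R v m n h1 h2 h3 h4 hC.1 hC.2 N M
    · have hA : j ≤ m ∨ m < i := by omega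
      have hnic : ¬ inI1 m n (i,c) := by unfold inI1; dsimp only; omega
      have hncj : ¬ inI1 m n (c,j) := by unfold inI1; dsimp only; omega
      have hvic : vi R v m i = vi R v m c := by
        unfold vi
        rcases hA with h | h
        · rw [if_pos (by omega), if_pos (by omega)]
        · rw [if_neg (by omega), if_neg (by omega)]
      have hvjc : vi R v m j = vi R v m c := by
        unfold vi
        rcases hA with h | h
        · rw [if_pos (by omega), if_pos (by omega)]
        · rw [if_neg (by omega), if_neg (by omega)]
      exact part4A R v m n h1 h2 h3 h4 hnic hncj hvic hvjc N M

/-- The identities (1)-(5) of Lemma 8.1 hold in `𝒱⁺`. -/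
theorem Vplus_identities (m n : ℕ) (hm : 1 ≤ m) (hn : 1 ≤ n) :
    -- (1)
    (∀ i c j N : ℕ, 1 ≤ i → i < c → c < j → j ≤ m + n →
      Ep A qA m n i j N =
        ∑ k ∈ Finset.range (N + 1),
          ((-1 : A) ^ k * ((vi A qA m c ^ (-(k : ℤ)) : Aˣ) : A)) •
            (Ep A qA m n c j k * Ep A qA m n i c N * Ep A qA m n c j (N - k))) ∧
    -- (2)
    (∀ i c j M N : ℕ, 1 ≤ i → i < c → c < j → j ≤ m + n →
      Ep A qA m n i c M * Ep A qA m n c j (M + N) * Ep A qA m n i c N =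
        Ep A qA m n c j N * Ep A qA m n i c (M + N) * Ep A qA m n c j M) ∧
    -- (3)
    (∀ i c j N : ℕ, 1 ≤ i → i < c → c < j → j ≤ m + n →
      Ep A qA m n i j N =
        ∑ k ∈ Finset.range (N + 1),
          ((-1 : A) ^ k * ((vi A qA m c ^ (-(k : ℤ)) : Aˣ) : A)) •
            (Ep A qA m n i c (N - k) * Ep A qA m n c j N * Ep A qA m n i c k)) ∧
    -- (4)
    (∀ i c j N M : ℕ, 1 ≤ i → i < c → c < j → j ≤ m + n →
      Ep A qA m n c j N * Ep A qA m n i c M =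
        ∑ k ∈ Finset.range (min N M + 1),
          ((-1 : A) ^ k *
              ((vi A qA m c ^ ((k : ℤ) + ((N - k) * (M - k) : ℕ)) : Aˣ) : A)) •
            (Ep A qA m n i c (M - k) * Ep A qA m n i j k * Ep A qA m n c j (N - k))) ∧
    -- (5)
    (∀ i s j t : ℕ, 1 ≤ i → i < s → s < j → j < t → t ≤ m + n →
      Ep A qA m n i j 1 * Ep A qA m n s t 1 -
          (if inI1 m n (i, j) ∧ inI1 m n (s, t) then (-1 : A) else 1) •
            (Ep A qA m n s t 1 * Ep A qA m n i j 1) =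
        (((vi A qA m j : Aˣ) : A) - (((vi A qA m j)⁻¹ : Aˣ) : A)) •
          (Ep A qA m n i t 1 * Ep A qA m n s j 1)) := by
  refine ⟨?_, ?_, ?_, ?_, ?_⟩
  · intro i c j N h1 h2 h3 h4
    exact part1 A qA m n h1 h2 h3 h4 N
  · intro i c j M N h1 h2 h3 h4
    exact part2 A qA m n h1 h2 h3 h4 M N
  · intro i c j N h1 h2 h3 h4
    exact part3 A qA m n h1 h2 h3 h4 N
  · intro i c j N M h1 h2 h3 h4
    exact part4 A qA m n h1 h2 h3 h4 N M
  · intro i s j t h1 h2 h3 h4 h5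
    exact part5 A qA m n h1 h2 h3 h4 h5

end QVA
end
end
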